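/- arXiv:2207.03941 — 8 statements merged into one kernel-verified Lean document; each statement's English description precedes it below -/
import Mathlib

section
/- Every path of odd length (odd number of edges) does not admit a locally irregular edge coloring. -/
/-- The number of edges of color `c` incident to vertex `v` under edge coloring `φ`
(the `c`-degree of `v`). -/
noncomputable def colorDeg {V α : Type*} (G : SimpleGraph V)
    (φ : Sym2 V → α) (c : α) (v : V) : ℕ :=
  Nat.card {w : V // G.Adj v w ∧ φ s(v, w) = c}

/-- An edge coloring of `G` is locally irregular if within every color class the
endpoints of each edge have distinct degrees (isolated vertices are irrelevant). -/
def IsLocIrrColoring {V α : Type*} (G : SimpleGraph V) (φ : Sym2 V → α) : Prop :=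
  ∀ ⦃v w : V⦄, G.Adj v w →
    colorDeg G φ (φ s(v, w)) v ≠ colorDeg G φ (φ s(v, w)) w

open SimpleGraph
open scoped Classical

lemma colorDeg_eq_ncard {n : ℕ} {α : Type} (φ : Sym2 (Fin (n+1)) → α) (c : α) (v : Fin (n+1)) :
    colorDeg (pathGraph (n+1)) φ c v =
      {w : Fin (n+1) | (pathGraph (n+1)).Adj v w ∧ φ s(v, w) = c}.ncard := by
  rw [colorDeg, ← Nat.card_coe_set_eq]
  rfl

lemma deg_left {n : ℕ} {α : Type} (φ : Sym2 (Fin (n+1)) → α) (c : α) (v w : Fin (n+1))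
    (hv : v.val = 0) (hvw : v.val + 1 = w.val) :
    colorDeg (pathGraph (n+1)) φ c v = if φ s(v, w) = c then 1 else 0 := by
  rw [colorDeg_eq_ncard]
  by_cases h : φ s(v, w) = c
  · rw [if_pos h]
    have hset : {x : Fin (n+1) | (pathGraph (n+1)).Adj v x ∧ φ s(v, x) = c} = {w} := by
      ext x
      simp only [Set.mem_setOf_eq, Set.mem_singleton_iff, pathGraph_adj]
      constructor
      · rintro ⟨hadj, _⟩
        exact Fin.ext (by omega)
      · rintro rfl
        exact ⟨Or.inl hvw, h⟩
    rw [hset, Set.ncard_singleton]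
  · rw [if_neg h]
    have hset : {x : Fin (n+1) | (pathGraph (n+1)).Adj v x ∧ φ s(v, x) = c} = ∅ := by
      ext x
      simp only [Set.mem_setOf_eq, Set.mem_empty_iff_false, iff_false, not_and, pathGraph_adj]
      intro hadj
      have hx : x = w := Fin.ext (by omega)
      subst hx
      exact h
    rw [hset, Set.ncard_empty]

lemma deg_right {n : ℕ} {α : Type} (φ : Sym2 (Fin (n+1)) → α) (c : α) (v w : Fin (n+1))
    (hw : w.val = n) (hvw : v.val + 1 = w.val) :
    colorDeg (pathGraph (n+1)) φ c w = if φ s(v, w) = c then 1 else 0 := by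
  rw [colorDeg_eq_ncard]
  have hsym : s(w, v) = s(v, w) := Sym2.eq_swap
  by_cases h : φ s(v, w) = c
  · rw [if_pos h]
    have hset : {x : Fin (n+1) | (pathGraph (n+1)).Adj w x ∧ φ s(w, x) = c} = {v} := by
      ext x
      simp only [Set.mem_setOf_eq, Set.mem_singleton_iff, pathGraph_adj]
      constructor
      · rintro ⟨hadj, _⟩
        have := x.isLt
        exact Fin.ext (by omega)
      · rintro rfl
        exact ⟨Or.inr hvw, by rw [hsym]; exact h⟩
    rw [hset, Set.ncard_singleton]
  · rw [if_neg h]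
    have hset : {x : Fin (n+1) | (pathGraph (n+1)).Adj w x ∧ φ s(w, x) = c} = ∅ := by
      ext x
      simp only [Set.mem_setOf_eq, Set.mem_empty_iff_false, iff_false, not_and, pathGraph_adj]
      intro hadj
      have := x.isLt
      have hx : x = v := Fin.ext (by omega)
      subst hx
      rw [hsym]
      exact h
    rw [hset, Set.ncard_empty]

lemma deg_mid {n : ℕ} {α : Type} (φ : Sym2 (Fin (n+1)) → α) (c : α) (u v w : Fin (n+1))
    (huv : u.val + 1 = v.val) (hvw : v.val + 1 = w.val) :
    colorDeg (pathGraph (n+1)) φ c v =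
      (if φ s(u, v) = c then 1 else 0) + (if φ s(v, w) = c then 1 else 0) := by
  rw [colorDeg_eq_ncard]
  have hsym : s(v, u) = s(u, v) := Sym2.eq_swap
  have huw : u ≠ w := by intro h; rw [h] at huv; omega
  have hwv := w.isLt
  have hmem : ∀ x : Fin (n+1),
      ((pathGraph (n+1)).Adj v x ∧ φ s(v, x) = c) ↔
        ((x = u ∧ φ s(u, v) = c) ∨ (x = w ∧ φ s(v, w) = c)) := by
    intro x
    simp only [pathGraph_adj]
    constructor
    · rintro ⟨hadj, hcol⟩
      rcases hadj with h1 | h1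
      · right
        have hx : x = w := Fin.ext (by omega)
        subst hx
        exact ⟨rfl, hcol⟩
      · left
        have hx : x = u := Fin.ext (by omega)
        subst hx
        rw [hsym] at hcol
        exact ⟨rfl, hcol⟩
    · rintro (⟨rfl, hcol⟩ | ⟨rfl, hcol⟩)
      · exact ⟨Or.inr huv, by rw [hsym]; exact hcol⟩
      · exact ⟨Or.inl hvw, hcol⟩
  by_cases h1 : φ s(u, v) = c <;> by_cases h2 : φ s(v, w) = c
  · rw [if_pos h1, if_pos h2]
    have hset : {x : Fin (n+1) | (pathGraph (n+1)).Adj v x ∧ φ s(v, x) = c} = {u, w} := by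
      ext x; rw [Set.mem_setOf_eq, hmem x]; simp [h1, h2]
    rw [hset, Set.ncard_pair huw]
  · rw [if_pos h1, if_neg h2]
    have hset : {x : Fin (n+1) | (pathGraph (n+1)).Adj v x ∧ φ s(v, x) = c} = {u} := by
      ext x; rw [Set.mem_setOf_eq, hmem x]; simp [h1, h2]
    rw [hset, Set.ncard_singleton]
  · rw [if_neg h1, if_pos h2]
    have hset : {x : Fin (n+1) | (pathGraph (n+1)).Adj v x ∧ φ s(v, x) = c} = {w} := by
      ext x; rw [Set.mem_setOf_eq, hmem x]; simp [h1, h2]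
    rw [hset, Set.ncard_singleton]
  · rw [if_neg h1, if_neg h2]
    have hset : {x : Fin (n+1) | (pathGraph (n+1)).Adj v x ∧ φ s(v, x) = c} = ∅ := by
      ext x; rw [Set.mem_setOf_eq, hmem x]; simp [h1, h2]
    rw [hset, Set.ncard_empty]

/-- Every path of odd length (odd number of edges) does not admit a locally
irregular edge coloring. The path graph on n + 1 vertices has n edges. -/
theorem odd_path_not_colorable (n : ℕ) (hn : Odd n) :
    ∀ (α : Type) (φ : Sym2 (Fin (n + 1)) → α),
      ¬ IsLocIrrColoring (SimpleGraph.pathGraph (n + 1)) φ := by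
  intro α φ hirr
  obtain ⟨m, hm⟩ := hn
  have hn1 : 1 ≤ n := by omega
  -- canonical vertices
  let vtx : ℕ → Fin (n+1) := fun i => ⟨min i n, by omega⟩
  have hval : ∀ i, i ≤ n → (vtx i).val = i := by
    intro i hi
    simp only [vtx]
    omega
  have hadj : ∀ i, i < n → (pathGraph (n+1)).Adj (vtx i) (vtx (i+1)) := by
    intro i hi
    rw [pathGraph_adj]
    left
    rw [hval i (by omega), hval (i+1) (by omega)]
  -- the "same color as next edge" predicate
  let S : ℕ → Prop := fun i => φ s(vtx i, vtx (i+1)) = φ s(vtx (i+1), vtx (i+1+1))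
  -- n ≥ 2 : otherwise edge 0 has two degree-one endpoints
  have hn2 : 2 ≤ n := by
    by_contra h
    have hn' : n = 1 := by omega
    have h1 := hirr (hadj 0 (by omega))
    rw [deg_left φ _ (vtx 0) (vtx (0+1)) (hval 0 (by omega))
        (by rw [hval 0 (by omega), hval (0+1) (by omega)]),
      deg_right φ _ (vtx 0) (vtx (0+1)) (by rw [hval (0+1) (by omega)]; omega)
        (by rw [hval 0 (by omega), hval (0+1) (by omega)]), if_pos rfl] at h1
    exact h1 rfl
  -- edge 0 : S 0 holds
  have hS0 : S 0 := by
    have h1 := hirr (hadj 0 (by omega))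
    rw [deg_left φ _ (vtx 0) (vtx (0+1)) (hval 0 (by omega))
        (by rw [hval 0 (by omega), hval (0+1) (by omega)]),
      deg_mid φ _ (vtx 0) (vtx (0+1)) (vtx (0+1+1))
        (by rw [hval 0 (by omega), hval (0+1) (by omega)])
        (by rw [hval (0+1) (by omega), hval (0+1+1) (by omega)]), if_pos rfl] at h1
    by_contra hS
    have hS' : ¬ φ s(vtx (0+1), vtx (0+1+1)) = φ s(vtx 0, vtx (0+1)) := fun h => hS h.symm
    rw [if_neg hS'] at h1
    exact h1 rfl
  -- middle edges : alternation
  have hstep : ∀ i, i + 3 ≤ n → (S i ↔ ¬ S (i + 1)) := by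
    intro i hi
    have h1 := hirr (hadj (i+1) (by omega))
    rw [deg_mid φ _ (vtx i) (vtx (i+1)) (vtx (i+1+1))
        (by rw [hval i (by omega), hval (i+1) (by omega)])
        (by rw [hval (i+1) (by omega), hval (i+1+1) (by omega)]),
      deg_mid φ _ (vtx (i+1)) (vtx (i+1+1)) (vtx (i+1+1+1))
        (by rw [hval (i+1) (by omega), hval (i+1+1) (by omega)])
        (by rw [hval (i+1+1) (by omega), hval (i+1+1+1) (by omega)]),
      if_pos rfl] at h1
    constructor
    · intro hSi hSi1
      rw [if_pos hSi, if_pos hSi1.symm] at h1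
      exact h1 rfl
    · intro hSi1
      by_contra hSi
      rw [if_neg hSi, if_neg (fun h => hSi1 h.symm)] at h1
      exact h1 rfl
  -- last edge : S (n-2) holds
  obtain ⟨k, hk⟩ : ∃ k, n = k + 2 := ⟨n - 2, by omega⟩
  have hlast : S k := by
    have h1 := hirr (hadj (k+1) (by omega))
    rw [deg_mid φ _ (vtx k) (vtx (k+1)) (vtx (k+1+1))
        (by rw [hval k (by omega), hval (k+1) (by omega)])
        (by rw [hval (k+1) (by omega), hval (k+1+1) (by omega)]),
      deg_right φ _ (vtx (k+1)) (vtx (k+1+1)) (by rw [hval (k+1+1) (by omega)]; omega)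
        (by rw [hval (k+1) (by omega), hval (k+1+1) (by omega)]),
      if_pos rfl] at h1
    by_contra hS
    rw [if_neg hS] at h1
    exact h1 rfl
  -- alternation forces S i ↔ Even i for i ≤ k
  have halt : ∀ i, i ≤ k → (S i ↔ Even i) := by
    intro i
    induction i with
    | zero => intro _; simpa using hS0
    | succ j ih =>
      intro hj
      have h1 := hstep j (by omega)
      have h2 := ih (by omega)
      rw [Nat.even_add_one, ← h2]
      tauto
  have := (halt k le_rfl).mp hlast
  obtain ⟨r, hr⟩ := this
  omega
end

section
/- Every path of even positive length admits a locally irregular edge coloring using exactly 2 colors, hence its locally irregular chromatic index is at most 2. -/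
/-- Every path of even positive length admits a locally irregular edge coloring
with 2 colors; hence its locally irregular chromatic index is at most 2. -/
theorem even_path_two_colorable (n : ℕ) (hn : Even n) (hpos : 0 < n) :
    ∃ φ : Sym2 (Fin (n + 1)) → Fin 2,
      IsLocIrrColoring (SimpleGraph.pathGraph (n + 1)) φ := by
  have hn2 : n % 2 = 0 := Nat.even_iff.mp hn
  set G := SimpleGraph.pathGraph (n + 1) with hG
  let f : ℕ → Fin 2 := fun i => ⟨i / 2 % 2, by omega⟩
  let φ : Sym2 (Fin (n + 1)) → Fin 2 :=
    Sym2.lift ⟨fun a b => f (min a.val b.val), fun a b => by simp [min_comm]⟩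
  have hφ : ∀ a b : Fin (n + 1), φ s(a, b) = f (min a.val b.val) := fun a b => rfl
  have hf : ∀ a b : ℕ, f a = f b ↔ a / 2 % 2 = b / 2 % 2 := by
    intro a b; simp [f, Fin.ext_iff]
  have hdeg : ∀ (c : Fin 2) (v : Fin (n + 1)),
      colorDeg G φ c v = ({u | G.Adj v u ∧ φ s(v, u) = c} : Set (Fin (n + 1))).ncard :=
    fun _ _ => rfl
  have hadjiff : ∀ a b : Fin (n + 1), G.Adj a b ↔ (a : ℕ) + 1 = b ∨ (b : ℕ) + 1 = a := by
    intro a b; exact SimpleGraph.pathGraph_adj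
  refine ⟨φ, ?_⟩
  have key : ∀ v w : Fin (n + 1), (v : ℕ) + 1 = (w : ℕ) →
      colorDeg G φ (φ s(v, w)) v ≠ colorDeg G φ (φ s(v, w)) w := by
    intro v w hvw
    have hiw : (w : ℕ) ≤ n := Nat.lt_succ_iff.mp w.isLt
    have hi : (v : ℕ) < n := by omega
    have hc : φ s(v, w) = f (v : ℕ) := by
      rw [hφ]; congr 1; omega
    rcases Nat.even_or_odd (v : ℕ) with hpar | hpar
    · -- v even : deg at v is 1, at w is 2
      have hpar' : (v : ℕ) % 2 = 0 := Nat.even_iff.mp hpar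
      have hx2 : (v : ℕ) + 2 < n + 1 := by omega
      set x : Fin (n + 1) := ⟨(v : ℕ) + 2, hx2⟩ with hxdef
      have hSv : ({u | G.Adj v u ∧ φ s(v, u) = φ s(v, w)} : Set (Fin (n + 1))) = {w} := by
        ext u
        simp only [Set.mem_setOf_eq, Set.mem_singleton_iff, hadjiff, hφ, hc, hf,
          Fin.ext_iff]
        omega
      have hSw : ({u | G.Adj w u ∧ φ s(w, u) = φ s(v, w)} : Set (Fin (n + 1))) = {v, x} := by
        ext u
        simp only [Set.mem_setOf_eq, Set.mem_insert_iff, Set.mem_singleton_iff, hadjiff,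
          hφ, hc, hf, Fin.ext_iff, hxdef]
        omega
      rw [hdeg, hdeg, hSv, hSw, Set.ncard_singleton,
        Set.ncard_pair (by simp only [ne_eq, hxdef, Fin.ext_iff, Fin.val_mk]; omega)]
      omega
    · -- v odd : deg at v is 2, at w is 1
      have hpar' : (v : ℕ) % 2 = 1 := Nat.odd_iff.mp hpar
      have hx2 : (v : ℕ) - 1 < n + 1 := by omega
      set x : Fin (n + 1) := ⟨(v : ℕ) - 1, hx2⟩ with hxdef
      have hSv : ({u | G.Adj v u ∧ φ s(v, u) = φ s(v, w)} : Set (Fin (n + 1))) = {w, x} := by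
        ext u
        simp only [Set.mem_setOf_eq, Set.mem_insert_iff, Set.mem_singleton_iff, hadjiff,
          hφ, hc, hf, Fin.ext_iff, hxdef]
        omega
      have hSw : ({u | G.Adj w u ∧ φ s(w, u) = φ s(v, w)} : Set (Fin (n + 1))) = {v} := by
        ext u
        simp only [Set.mem_setOf_eq, Set.mem_singleton_iff, hadjiff, hφ, hc, hf,
          Fin.ext_iff]
        omega
      rw [hdeg, hdeg, hSw, hSv, Set.ncard_singleton,
        Set.ncard_pair (by simp only [ne_eq, hxdef, Fin.ext_iff, Fin.val_mk]; omega)]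
      omega
  intro v w hadj
  rcases (hadjiff v w).mp hadj with h | h
  · exact key v w h
  · have h' := key w v h
    rw [Sym2.eq_swap (a := v) (b := w)]
    exact fun he => h' he.symm
end

section
/- Every cycle of odd length does not admit a locally irregular edge coloring. -/
/-!
In a cycle every colour class has maximum degree at most 2, so local irregularity forces each
edge of colour `c` to have one endpoint of `c`-degree 2 and the other of `c`-degree 1. Call a
vertex monochromatic if its two edges share a colour: the endpoints of every edge then differ in
being monochromatic, which is a proper 2-colouring of the cycle, impossible when its length is odd.
-/

open SimpleGraph

lemma colorDeg_of_neighborSet_eq_pair {V α : Type*} [DecidableEq α] {G : SimpleGraph V}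
    {φ : Sym2 V → α} {c : α} {v a b : V} (hab : a ≠ b) (hv : G.neighborSet v = {a, b}) :
    colorDeg G φ c v = (if φ s(v, a) = c then 1 else 0) + (if φ s(v, b) = c then 1 else 0) := by
  classical
  have hadj : ∀ w, G.Adj v w ↔ w ∈ ({a, b} : Finset V) := fun w => by
    simpa using Set.ext_iff.mp hv w
  rw [colorDeg, ← Finset.sum_pair (f := fun w => if φ s(v, w) = c then 1 else 0) hab,
    ← Finset.card_filter, ← Nat.card_eq_finsetCard]
  exact Nat.card_congr (Equiv.subtypeEquivRight fun w => by simp [hadj])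

lemma colorDeg_cycleGraph {n : ℕ} {α : Type*} [DecidableEq α] (φ : Sym2 (Fin (n + 3)) → α)
    (c : α) (v : Fin (n + 3)) :
    colorDeg (cycleGraph (n + 3)) φ c v =
      (if φ s(v, v - 1) = c then 1 else 0) + (if φ s(v, v + 1) = c then 1 else 0) := by
  refine colorDeg_of_neighborSet_eq_pair ?_ cycleGraph_neighborSet
  have hdeg := cycleGraph_degree_three_le (n := n) (v := v)
  rw [cycleGraph_degree_two_le] at hdeg
  intro h
  simp [h] at hdeg

lemma cycleGraph_adj_iff {n : ℕ} {u v : Fin (n + 2)} :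
    (cycleGraph (n + 2)).Adj u v ↔ v = u + 1 ∨ u = v + 1 := by
  rw [cycleGraph_adj, sub_eq_iff_eq_add, sub_eq_iff_eq_add, add_comm 1, add_comm 1]
  exact or_comm

lemma not_colorable_two_cycleGraph_of_odd {n : ℕ} (hn : Odd n) (h3 : 3 ≤ n) :
    ¬ (cycleGraph n).Colorable 2 := by
  obtain ⟨m, rfl⟩ : ∃ m, n = m + 3 := ⟨n - 3, by omega⟩
  rw [two_colorable_iff_forall_loop_even]
  intro h
  have hlen := h 0 (cycleGraph.cycle m)
  rw [cycleGraph.length_cycle, ← Nat.not_odd_iff_even] at hlen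
  exact hlen hn

def IsMonochromaticAt {n : ℕ} {α : Type*} (φ : Sym2 (Fin (n + 3)) → α) (v : Fin (n + 3)) : Prop :=
  φ s(v - 1, v) = φ s(v, v + 1)

lemma IsLocIrrColoring.isMonochromaticAt_add_one_iff {n : ℕ} {α : Type*}
    {φ : Sym2 (Fin (n + 3)) → α} (hφ : IsLocIrrColoring (cycleGraph (n + 3)) φ)
    (v : Fin (n + 3)) : IsMonochromaticAt φ (v + 1) ↔ ¬ IsMonochromaticAt φ v := by
  classical
  have h := hφ (cycleGraph_adj_iff.mpr (Or.inl rfl) : (cycleGraph (n + 3)).Adj v (v + 1))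
  rw [colorDeg_cycleGraph, colorDeg_cycleGraph, add_sub_cancel_right,
    Sym2.eq_swap (a := v + 1), Sym2.eq_swap (a := v) (b := v - 1), if_pos rfl] at h
  rw [IsMonochromaticAt, IsMonochromaticAt, add_sub_cancel_right, eq_comm (a := φ s(v, v + 1))]
  split_ifs at h <;> simp_all

lemma IsLocIrrColoring.colorable_two_cycleGraph {n : ℕ} {α : Type*}
    {φ : Sym2 (Fin (n + 3)) → α} (hφ : IsLocIrrColoring (cycleGraph (n + 3)) φ) :
    (cycleGraph (n + 3)).Colorable 2 := by
  classical
  refine ⟨Coloring.mk (fun v => if IsMonochromaticAt φ v then 0 else 1) fun {u v} huv => ?_⟩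
  rcases cycleGraph_adj_iff.mp huv with rfl | rfl
  · have := hφ.isMonochromaticAt_add_one_iff u
    split_ifs <;> simp_all
  · have := hφ.isMonochromaticAt_add_one_iff v
    split_ifs <;> simp_all

/-- Every cycle of odd length does not admit a locally irregular edge coloring. -/
theorem odd_cycle_not_colorable (n : ℕ) (hn : Odd n) (h3 : 3 ≤ n) :
    ∀ (α : Type) (φ : Sym2 (Fin n) → α),
      ¬ IsLocIrrColoring (SimpleGraph.cycleGraph n) φ := by
  obtain ⟨m, rfl⟩ : ∃ m, n = m + 3 := ⟨n - 3, by omega⟩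
  intro α φ hφ
  exact not_colorable_two_cycleGraph_of_odd hn (by omega) hφ.colorable_two_cycleGraph
end

section
/- Every cycle of even length admits a locally irregular edge coloring with at most 3 colors. -/
/-!
Take the even vertices of the cycle `C_{2k}` as centres and give both edges at the centre `2i`
the colour of `i` in a proper 3-colouring of `C_k`. Every colour class is then a disjoint union
of paths with two edges: a centre has degree 2 in its colour, while the odd vertex `2i + 1` lies
between the centres `2i` and `2i + 2`, whose colours differ, so it has degree 1 in each.
-/

open SimpleGraph

section Center

variable {V α : Type*} {G : SimpleGraph V} {φ : Sym2 V → α} {c : α} {v w : V}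

theorem colorDeg_eq_degree [Fintype (G.neighborSet v)] (h : ∀ w, G.Adj v w → φ s(v, w) = c) :
    colorDeg G φ c v = G.degree v := by
  rw [← card_neighborSet_eq_degree, ← Nat.card_eq_fintype_card, colorDeg]
  exact Nat.card_congr (Equiv.subtypeEquivRight fun w => and_iff_left_of_imp (h w))

theorem colorDeg_lt_degree [Fintype (G.neighborSet v)] (hvw : G.Adj v w) (h : φ s(v, w) ≠ c) :
    colorDeg G φ c v < G.degree v := by
  rw [← card_neighborSet_eq_degree, ← Nat.card_eq_fintype_card, colorDeg]
  exact Set.ncard_lt_ncard (s := {w | G.Adj v w ∧ φ s(v, w) = c})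
    ⟨fun _ hx => hx.1, fun hsub => h (hsub hvw).2⟩ (Set.toFinite _)

theorem isLocIrrColoring_of_center [G.LocallyFinite] {d : ℕ} (hG : G.IsRegularOfDegree d)
    (b : G.Coloring Bool) (κ : V → α)
    (hφ : ∀ ⦃v w⦄, G.Adj v w → b v = true → φ s(v, w) = κ v)
    (hκ : ∀ w, b w = false → ∃ u u', G.Adj w u ∧ G.Adj w u' ∧ κ u ≠ κ u') :
    IsLocIrrColoring G φ := by
  have center_ne : ∀ ⦃v w⦄, G.Adj v w → b v = true →
      colorDeg G φ (φ s(v, w)) v ≠ colorDeg G φ (φ s(v, w)) w := by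
    intro v w hvw hv
    have hw : b w = false := by simpa [hv] using (b.valid hvw).symm
    have leaf_color : ∀ u, G.Adj w u → φ s(w, u) = κ u := fun u hwu => by
      rw [Sym2.eq_swap]
      exact hφ hwu.symm (by simpa [hw] using b.valid hwu.symm)
    obtain ⟨x, hwx, hx⟩ : ∃ x, G.Adj w x ∧ φ s(w, x) ≠ κ v := by
      obtain ⟨u, u', hwu, hwu', hκu⟩ := hκ w hw
      by_cases hu : κ u = κ v
      · exact ⟨u', hwu', by rw [leaf_color u' hwu']; exact fun h => hκu (hu.trans h.symm)⟩
      · exact ⟨u, hwu, by rwa [leaf_color u hwu]⟩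
    rw [hφ hvw hv, colorDeg_eq_degree fun u hvu => hφ hvu hv, hG v]
    exact (hG w ▸ colorDeg_lt_degree hwx hx).ne'
  intro v w hvw
  cases hv : b v
  · rw [Sym2.eq_swap]
    exact (center_ne hvw.symm (by simpa [hv] using b.valid hvw)).symm
  · exact center_ne hvw hv

/-- On an edge of a graph properly 2-coloured by `b`, this is `κ` at the endpoint with
`b = true`; its value on other pairs is irrelevant. -/
noncomputable def centerColoring [Nonempty V] (b : V → Bool) (κ : V → α) (e : Sym2 V) : α :=
  κ (Classical.epsilon fun v => v ∈ e ∧ b v = true)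

theorem centerColoring_of_adj [Nonempty V] (b : G.Coloring Bool) (κ : V → α) (hvw : G.Adj v w)
    (hv : b v = true) : centerColoring b κ s(v, w) = κ v := by
  obtain ⟨hmem, hb⟩ := Classical.epsilon_spec
    (p := fun x => x ∈ s(v, w) ∧ b x = true) ⟨v, Sym2.mem_mk_left v w, hv⟩
  rcases Sym2.mem_iff.1 hmem with h | h
  · rw [centerColoring, h]
  · exact absurd (hv.trans (h ▸ hb).symm) (b.valid hvw)

end Center

theorem Fin.divNat_add_one_of_odd {k : ℕ} [NeZero k] (w : Fin (k * 2)) (hw : w.val % 2 = 1) :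
    (w + 1).divNat = (w - 1).divNat + 1 := by
  have hw' : w.val < k * 2 := w.isLt
  have h1 : ((1 : Fin (k * 2)) : ℕ) = 1 := by rw [Fin.val_one', Nat.mod_eq_of_lt (by omega)]
  have hsub : ((w - 1 : Fin (k * 2)) : ℕ) = w.val - 1 := by
    rw [Fin.coe_sub_iff_le.2 (by rw [Fin.le_def, h1]; omega), h1]
  ext
  rw [Fin.coe_divNat, Fin.val_add, Fin.val_add, Fin.coe_divNat, hsub, h1, Fin.val_one',
    Nat.add_mod_mod]
  rcases Nat.lt_or_ge (w.val + 1) (k * 2) with hlt | hge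
  · rw [Nat.mod_eq_of_lt hlt, Nat.mod_eq_of_lt (by omega)]
    omega
  · rw [show w.val + 1 = k * 2 by omega, show (w.val - 1) / 2 + 1 = k by omega, Nat.mod_self,
      Nat.mod_self]

theorem cycleGraph_isRegularOfDegree_two {n : ℕ} (hn : 3 ≤ n) :
    (cycleGraph n).IsRegularOfDegree 2 := by
  obtain ⟨m, rfl⟩ := Nat.exists_eq_add_of_le' hn
  exact fun _ => cycleGraph_degree_three_le

theorem exists_isLocIrrColoring_cycleGraph_mul_two {α : Type*} {m : ℕ}
    (C : (cycleGraph (m + 2)).Coloring α) :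
    ∃ φ : Sym2 (Fin ((m + 2) * 2)) → α, IsLocIrrColoring (cycleGraph ((m + 2) * 2)) φ := by
  let b := cycleGraph.bicoloring_of_even _ (even_two.mul_left (m + 2))
  let κ : Fin ((m + 2) * 2) → α := fun v => C v.divNat
  refine ⟨centerColoring b κ, isLocIrrColoring_of_center (cycleGraph_isRegularOfDegree_two
    (by omega)) b κ (fun _ _ => centerColoring_of_adj b κ) ?_⟩
  intro w hw
  have hodd : w.val % 2 = 1 := by
    have heven : decide (w.val % 2 = 0) = false := hw
    simpa using heven
  refine ⟨w - 1, w + 1, Or.inl (sub_sub_cancel w 1), Or.inr (add_sub_cancel_left w 1),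
    C.valid ?_⟩
  rw [Fin.divNat_add_one_of_odd w hodd]
  exact Or.inr (add_sub_cancel_left _ 1)

/-- Every cycle of even length admits a locally irregular edge coloring with at
most 3 colors. -/
theorem even_cycle_three_colorable (n : ℕ) (hn : Even n) (h3 : 3 ≤ n) :
    ∃ φ : Sym2 (Fin n) → Fin 3,
      IsLocIrrColoring (SimpleGraph.cycleGraph n) φ := by
  obtain ⟨m, rfl⟩ : ∃ m, n = (m + 2) * 2 := ⟨n / 2 - 2, by rcases hn with ⟨k, rfl⟩; omega⟩
  exact exists_isLocIrrColoring_cycleGraph_mul_two (cycleGraph.tricoloring (m + 2) (by omega))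
end

section
/- If a graph G admits a locally irregular edge coloring with k ≥ 3 colors and G contains an ear of length q ≥ 3, then the graph G' obtained from G by replacing this ear with an ear of length q + 2 also admits a locally irregular edge coloring with k colors. -/
open Sum

/-- The graph obtained from G by replacing the edge x y by a path x, n0, n1, y of
length 3 through two new vertices (subdividing the edge twice). -/
def subdivideTwice {V : Type*} [DecidableEq V] (G : SimpleGraph V) (x y : V) :
    SimpleGraph (V ⊕ Fin 2) :=
  SimpleGraph.fromRel (fun a b =>
    match a, b with
    | Sum.inl v, Sum.inl w => G.Adj v w ∧ ¬(v = x ∧ w = y) ∧ ¬(v = y ∧ w = x)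
    | Sum.inl v, Sum.inr i => (v = x ∧ i = 0) ∨ (v = y ∧ i = 1)
    | Sum.inr i, Sum.inr j => i ≠ j
    | _, _ => False)

private lemma pair_card {α : Type*} {P : α → Prop} {u v : α} (huv : u ≠ v)
    (A B : Prop) [Decidable A] [Decidable B]
    (h : ∀ w, P w ↔ (w = u ∧ A) ∨ (w = v ∧ B)) :
    Nat.card {w // P w} = (if A then 1 else 0) + (if B then 1 else 0) := by
  have hset : {w | P w} = (if A then {u} else ∅) ∪ (if B then ({v} : Set α) else ∅) := by
    ext w; simp only [Set.mem_setOf_eq, h]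
    split_ifs <;> simp <;> tauto
  rw [show Nat.card {w // P w} = Set.ncard {w | P w} from (Nat.card_coe_set_eq _).symm, hset]
  split_ifs <;> simp [Set.ncard_pair huv.symm]

private lemma ncard_image_pred {α β : Type*} (g : α → β) (hg : Function.Injective g)
    {P : β → Prop} {Q : α → Prop} (h : {W | P W} = g '' {w | Q w}) :
    Nat.card {W // P W} = Nat.card {w // Q w} := by
  rw [show Nat.card {W // P W} = Set.ncard {W | P W} from (Nat.card_coe_set_eq _).symm,
    show Nat.card {w // Q w} = Set.ncard {w | Q w} from (Nat.card_coe_set_eq _).symm,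
    h, Set.ncard_image_of_injective _ hg]

private lemma sdt_adj_inl_inl {V : Type*} [DecidableEq V] (G : SimpleGraph V) (x y : V)
    (v w : V) : (subdivideTwice G x y).Adj (inl v) (inl w) ↔
      G.Adj v w ∧ ¬(v = x ∧ w = y) ∧ ¬(v = y ∧ w = x) := by
  rw [subdivideTwice, SimpleGraph.fromRel_adj]
  constructor
  · rintro ⟨-, h | h⟩
    · exact h
    · exact ⟨h.1.symm, fun hc => h.2.2 ⟨hc.2, hc.1⟩, fun hc => h.2.1 ⟨hc.2, hc.1⟩⟩
  · rintro ⟨h1, h2, h3⟩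
    exact ⟨by simpa using h1.ne, Or.inl ⟨h1, h2, h3⟩⟩

private lemma sdt_adj_inl_inr {V : Type*} [DecidableEq V] (G : SimpleGraph V) (x y : V)
    (v : V) (i : Fin 2) : (subdivideTwice G x y).Adj (inl v) (inr i) ↔
      (v = x ∧ i = 0) ∨ (v = y ∧ i = 1) := by
  rw [subdivideTwice, SimpleGraph.fromRel_adj]
  constructor
  · rintro ⟨-, h | h⟩
    · exact h
    · exact h.elim
  · rintro h
    exact ⟨by simp, Or.inl h⟩

private lemma sdt_adj_inr_inr {V : Type*} [DecidableEq V] (G : SimpleGraph V) (x y : V)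
    (i j : Fin 2) : (subdivideTwice G x y).Adj (inr i) (inr j) ↔ i ≠ j := by
  rw [subdivideTwice, SimpleGraph.fromRel_adj]
  constructor
  · rintro ⟨-, h | h⟩
    · exact h
    · exact h.symm
  · exact fun h => ⟨by simpa using h, Or.inl h⟩

private lemma exists_third {k : ℕ} (hk : 3 ≤ k) (u v : Fin k) :
    ∃ e : Fin k, e ≠ u ∧ e ≠ v := by
  have h : (Finset.univ \ {u, v} : Finset (Fin k)).Nonempty := by
    rw [← Finset.card_pos, Finset.card_sdiff_of_subset (Finset.subset_univ _)]
    have h2 : ({u, v} : Finset (Fin k)).card ≤ 2 :=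
      (Finset.card_insert_le _ _).trans (by simp)
    simp only [Finset.card_univ, Fintype.card_fin]
    omega
  obtain ⟨e, he⟩ := h
  rw [Finset.mem_sdiff] at he
  simp only [Finset.mem_insert, Finset.mem_singleton, not_or] at he
  exact ⟨e, he.2.1, he.2.2⟩

private def newCol {V : Type*} [DecidableEq V] {k : ℕ} (φ : Sym2 V → Fin k)
    (y u2 : V) (hab : Prop) [Decidable hab] (a e : Fin k) :
    V ⊕ Fin 2 → V ⊕ Fin 2 → Fin k
  | inl v, inl w => if hab ∧ s(v, w) = s(y, u2) then e else φ s(v, w)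
  | inl _, inr i => if i = 0 then a else e
  | inr i, inl _ => if i = 0 then a else e
  | inr _, inr _ => if hab then a else e

private lemma newCol_symm {V : Type*} [DecidableEq V] {k : ℕ} (φ : Sym2 V → Fin k)
    (y u2 : V) (hab : Prop) [Decidable hab] (a e : Fin k) :
    ∀ U W, newCol φ y u2 hab a e U W = newCol φ y u2 hab a e W U := by
  rintro (v | i) (w | j) <;> simp only [newCol]
  rw [show s(w, v) = s(v, w) from Sym2.eq_swap]

set_option maxHeartbeats 1000000 in
/-- If G admits a locally irregular edge coloring with k ≥ 3 colors and contains
an ear p 0, ..., p q of length q ≥ 3 (all internal vertices of degree 2 in G),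
then the graph obtained by replacing this ear by an ear of length q + 2 (inserting
two extra degree-2 vertices) also admits a locally irregular edge coloring with
k colors. -/
theorem ear_lengthen_keeps_coloring {V : Type*} [Fintype V] [DecidableEq V]
    (G : SimpleGraph V) [DecidableRel G.Adj]
    (k : ℕ) (hk : 3 ≤ k)
    (q : ℕ) (hq : 3 ≤ q) (p : ℕ → V)
    (hinj : ∀ i ≤ q, ∀ j ≤ q, p i = p j → i = j)
    (hadj : ∀ i < q, G.Adj (p i) (p (i + 1)))
    (hdeg : ∀ i, 0 < i → i < q → G.degree (p i) = 2)
    (hcol : ∃ φ : Sym2 V → Fin k, IsLocIrrColoring G φ) :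
    ∃ ψ : Sym2 (V ⊕ Fin 2) → Fin k,
      IsLocIrrColoring (subdivideTwice G (p 0) (p 1)) ψ := by
  classical
  obtain ⟨φ, hφ⟩ := hcol
  have hne : ∀ i ≤ 3, ∀ j ≤ 3, i ≠ j → p i ≠ p j := by
    intro i hi j hj hij hpij
    exact hij (hinj i (le_trans hi hq) j (le_trans hj hq) hpij)
  have h01 : p 0 ≠ p 1 := hne 0 (by omega) 1 (by omega) (by omega)
  have h02 : p 0 ≠ p 2 := hne 0 (by omega) 2 (by omega) (by omega)
  have h03 : p 0 ≠ p 3 := hne 0 (by omega) 3 (by omega) (by omega)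
  have h12 : p 1 ≠ p 2 := hne 1 (by omega) 2 (by omega) (by omega)
  have h13 : p 1 ≠ p 3 := hne 1 (by omega) 3 (by omega) (by omega)
  have h23 : p 2 ≠ p 3 := hne 2 (by omega) 3 (by omega) (by omega)
  have hxy : G.Adj (p 0) (p 1) := hadj 0 (by omega)
  have hyu : G.Adj (p 1) (p 2) := hadj 1 (by omega)
  have hu23 : G.Adj (p 2) (p 3) := hadj 2 (by omega)
  have hnbr1 : ∀ w, G.Adj (p 1) w ↔ w = p 0 ∨ w = p 2 := by
    have hcard : (G.neighborFinset (p 1)).card = 2 := by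
      rw [SimpleGraph.card_neighborFinset_eq_degree]
      exact hdeg 1 one_pos (by omega)
    have hsub : ({p 0, p 2} : Finset V) ⊆ G.neighborFinset (p 1) := by
      intro w hw
      rw [SimpleGraph.mem_neighborFinset]
      rcases Finset.mem_insert.1 hw with rfl | hw
      · exact hxy.symm
      · rw [Finset.mem_singleton] at hw; subst hw; exact hyu
    have heq : ({p 0, p 2} : Finset V) = G.neighborFinset (p 1) :=
      Finset.eq_of_subset_of_card_le hsub
        (by rw [hcard, Finset.card_insert_of_notMem (by simpa using h02), Finset.card_singleton])
    intro w
    rw [← SimpleGraph.mem_neighborFinset, ← heq]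
    simp
  have hnbr2 : ∀ w, G.Adj (p 2) w ↔ w = p 1 ∨ w = p 3 := by
    have hcard : (G.neighborFinset (p 2)).card = 2 := by
      rw [SimpleGraph.card_neighborFinset_eq_degree]
      exact hdeg 2 two_pos (by omega)
    have hsub : ({p 1, p 3} : Finset V) ⊆ G.neighborFinset (p 2) := by
      intro w hw
      rw [SimpleGraph.mem_neighborFinset]
      rcases Finset.mem_insert.1 hw with rfl | hw
      · exact hyu.symm
      · rw [Finset.mem_singleton] at hw; subst hw; exact hu23
    have heq : ({p 1, p 3} : Finset V) = G.neighborFinset (p 2) :=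
      Finset.eq_of_subset_of_card_le hsub
        (by rw [hcard, Finset.card_insert_of_notMem (by simpa using h13), Finset.card_singleton])
    intro w
    rw [← SimpleGraph.mem_neighborFinset, ← heq]
    simp
  obtain ⟨a, ha⟩ : ∃ c, φ s(p 0, p 1) = c := ⟨_, rfl⟩
  obtain ⟨b, hb⟩ : ∃ c, φ s(p 1, p 2) = c := ⟨_, rfl⟩
  obtain ⟨d, hd⟩ : ∃ c, φ s(p 2, p 3) = c := ⟨_, rfl⟩
  have Dy : ∀ c, colorDeg G φ c (p 1)
      = (if a = c then 1 else 0) + (if b = c then 1 else 0) := by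
    intro c
    unfold colorDeg
    apply pair_card h02
    intro w
    constructor
    · rintro ⟨hA, hc⟩
      rcases (hnbr1 w).1 hA with rfl | rfl
      · rw [show s(p 1, p 0) = s(p 0, p 1) from Sym2.eq_swap, ha] at hc
        exact Or.inl ⟨rfl, hc⟩
      · rw [hb] at hc
        exact Or.inr ⟨rfl, hc⟩
    · rintro (⟨rfl, hc⟩ | ⟨rfl, hc⟩)
      · exact ⟨hxy.symm, by rwa [show s(p 1, p 0) = s(p 0, p 1) from Sym2.eq_swap, ha]⟩
      · exact ⟨hyu, by rwa [hb]⟩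
  have Du2 : ∀ c, colorDeg G φ c (p 2)
      = (if b = c then 1 else 0) + (if d = c then 1 else 0) := by
    intro c
    unfold colorDeg
    apply pair_card h13
    intro w
    constructor
    · rintro ⟨hA, hc⟩
      rcases (hnbr2 w).1 hA with rfl | rfl
      · rw [show s(p 2, p 1) = s(p 1, p 2) from Sym2.eq_swap, hb] at hc
        exact Or.inl ⟨rfl, hc⟩
      · rw [hd] at hc
        exact Or.inr ⟨rfl, hc⟩
    · rintro (⟨rfl, hc⟩ | ⟨rfl, hc⟩)
      · exact ⟨hyu.symm, by rwa [show s(p 2, p 1) = s(p 1, p 2) from Sym2.eq_swap, hb]⟩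
      · exact ⟨hu23, by rwa [hd]⟩
  have O1 : colorDeg G φ a (p 0) ≠ 1 + (if b = a then 1 else 0) := by
    have h := hφ hxy
    rw [ha, Dy a] at h
    simpa using h
  have O2 : ¬ ((if a = b then 1 else 0) + 1 = 1 + (if d = b then 1 else 0)) := by
    have h := hφ hyu
    rw [hb, Dy b, Du2 b] at h
    simpa using h
  have hbd : a = b → d ≠ b := by
    intro hab hdb
    exact O2 (by simp [hab, hdb])
  have hbd2 : a ≠ b → d = b := by
    intro hab
    by_contra hdb
    exact O2 (by simp [hab, hdb])
  obtain ⟨e, hea, heb, hed⟩ : ∃ e : Fin k, e ≠ a ∧ e ≠ b ∧ e ≠ d := by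
    by_cases hab : a = b
    · obtain ⟨e, he1, he2⟩ := exists_third hk a d
      exact ⟨e, he1, hab ▸ he1, he2⟩
    · obtain ⟨e, he1, he2⟩ := exists_third hk a b
      exact ⟨e, he1, he2, (hbd2 hab) ▸ he2⟩
  have hae : ¬ a = e := fun h => hea h.symm
  have hbe : ¬ b = e := fun h => heb h.symm
  have hde : ¬ d = e := fun h => hed h.symm
  set G' := subdivideTwice G (p 0) (p 1) with hG'
  set ψ : Sym2 (V ⊕ Fin 2) → Fin k :=
    Sym2.lift ⟨newCol φ (p 1) (p 2) (a = b) a e, newCol_symm φ (p 1) (p 2) (a = b) a e⟩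
    with hψdef
  have hΨ : ∀ U W, ψ s(U, W) = newCol φ (p 1) (p 2) (a = b) a e U W :=
    fun U W => Sym2.lift_mk _ U W
  have AdjLL : ∀ v w : V, G'.Adj (inl v) (inl w) ↔
      G.Adj v w ∧ ¬(v = p 0 ∧ w = p 1) ∧ ¬(v = p 1 ∧ w = p 0) :=
    fun v w => sdt_adj_inl_inl G (p 0) (p 1) v w
  have AdjLR : ∀ (v : V) (i : Fin 2), G'.Adj (inl v) (inr i) ↔
      (v = p 0 ∧ i = 0) ∨ (v = p 1 ∧ i = 1) :=
    fun v i => sdt_adj_inl_inr G (p 0) (p 1) v i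
  have AdjRR : ∀ i j : Fin 2, G'.Adj (inr i) (inr j) ↔ i ≠ j :=
    fun i j => sdt_adj_inr_inr G (p 0) (p 1) i j
  refine ⟨ψ, ?_⟩
  have Cx : ∀ c, colorDeg G' ψ c (inl (p 0)) = colorDeg G φ c (p 0) := by
    intro c
    unfold colorDeg
    apply ncard_image_pred (fun w => if w = p 1 then inr 0 else inl w)
    · intro w1 w2 h
      dsimp only at h
      split_ifs at h <;> simp_all
    · ext W
      simp only [Set.mem_setOf_eq, Set.mem_image]
      constructor
      · rintro ⟨hA, hc⟩
        rcases W with w | i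
        · rw [AdjLL] at hA
          obtain ⟨hAdj, hp1, hp2⟩ := hA
          have hw1 : w ≠ p 1 := fun h => hp1 ⟨rfl, h⟩
          refine ⟨w, ⟨hAdj, ?_⟩, by simp [hw1]⟩
          rw [hΨ] at hc
          simp only [newCol] at hc
          rw [if_neg ?_] at hc
          · exact hc
          · rintro ⟨hab, hs⟩
            rcases Sym2.eq_iff.1 hs with ⟨hx1, -⟩ | ⟨hx1, -⟩
            · exact h01 hx1
            · exact h02 hx1
        · rw [AdjLR] at hA
          rcases hA with ⟨-, rfl⟩ | ⟨hx, -⟩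
          · refine ⟨p 1, ⟨hxy, ?_⟩, by simp⟩
            rw [hΨ] at hc
            simp only [newCol, if_pos rfl] at hc
            rw [ha]; exact hc
          · exact absurd hx h01
      · rintro ⟨w, ⟨hAdj, hc⟩, rfl⟩
        by_cases hw1 : w = p 1
        · subst hw1
          simp only [if_pos rfl]
          refine ⟨(AdjLR _ _).2 (Or.inl ⟨rfl, rfl⟩), ?_⟩
          rw [hΨ]
          simp only [newCol, if_pos rfl]
          rw [ha] at hc; exact hc
        · simp only [if_neg hw1]
          refine ⟨(AdjLL _ _).2 ⟨hAdj, fun h => hw1 h.2, fun h => h01 h.1⟩, ?_⟩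
          rw [hΨ]
          simp only [newCol]
          rw [if_neg ?_]
          · exact hc
          · rintro ⟨hab, hs⟩
            rcases Sym2.eq_iff.1 hs with ⟨hx1, -⟩ | ⟨hx1, -⟩
            · exact h01 hx1
            · exact h02 hx1
  have Cgen : ∀ v, v ≠ p 0 → v ≠ p 1 → (a = b → v ≠ p 2) →
      ∀ c, colorDeg G' ψ c (inl v) = colorDeg G φ c v := by
    intro v hv0 hv1 hv2 c
    unfold colorDeg
    apply ncard_image_pred (fun w => (inl w : V ⊕ Fin 2)) inl_injective
    ext W
    simp only [Set.mem_setOf_eq, Set.mem_image]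
    constructor
    · rintro ⟨hA, hc⟩
      rcases W with w | i
      · rw [AdjLL] at hA
        refine ⟨w, ⟨hA.1, ?_⟩, rfl⟩
        rw [hΨ] at hc
        simp only [newCol] at hc
        rw [if_neg ?_] at hc
        · exact hc
        · rintro ⟨hab, hs⟩
          rcases Sym2.eq_iff.1 hs with ⟨hx1, -⟩ | ⟨hx1, -⟩
          · exact hv1 hx1
          · exact (hv2 hab) hx1
      · rw [AdjLR] at hA
        rcases hA with ⟨hx, -⟩ | ⟨hx, -⟩
        · exact absurd hx hv0
        · exact absurd hx hv1
    · rintro ⟨w, ⟨hAdj, hc⟩, rfl⟩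
      refine ⟨(AdjLL _ _).2 ⟨hAdj, fun h => hv0 h.1, fun h => hv1 h.1⟩, ?_⟩
      rw [hΨ]
      simp only [newCol]
      rw [if_neg ?_]
      · exact hc
      · rintro ⟨hab, hs⟩
        rcases Sym2.eq_iff.1 hs with ⟨hx1, -⟩ | ⟨hx1, -⟩
        · exact hv1 hx1
        · exact (hv2 hab) hx1
  have Dy' : ∀ c, colorDeg G' ψ c (inl (p 1))
      = (if e = c then 1 else 0) + (if (if a = b then e else b) = c then 1 else 0) := by
    intro c
    unfold colorDeg
    apply pair_card (show (inr 1 : V ⊕ Fin 2) ≠ inl (p 2) by simp)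
    intro W
    constructor
    · rintro ⟨hA, hc⟩
      rcases W with w | i
      · rw [AdjLL] at hA
        obtain ⟨hAdj, -, hp⟩ := hA
        have hw2 : w = p 2 := by
          rcases (hnbr1 w).1 hAdj with rfl | rfl
          · exact absurd ⟨rfl, rfl⟩ hp
          · rfl
        subst hw2
        refine Or.inr ⟨rfl, ?_⟩
        rw [hΨ] at hc
        simp only [newCol] at hc
        by_cases hab : a = b
        · rw [if_pos ⟨hab, trivial⟩] at hc; rwa [if_pos hab]
        · rw [if_neg (fun h => hab h.1), hb] at hc; rwa [if_neg hab]
      · rw [AdjLR] at hA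
        rcases hA with ⟨hx, -⟩ | ⟨-, rfl⟩
        · exact absurd hx.symm h01
        · refine Or.inl ⟨rfl, ?_⟩
          rw [hΨ] at hc
          simp only [newCol] at hc
          rwa [if_neg (by decide)] at hc
    · rintro (⟨rfl, hc⟩ | ⟨rfl, hc⟩)
      · refine ⟨(AdjLR _ _).2 (Or.inr ⟨rfl, rfl⟩), ?_⟩
        rw [hΨ]
        simp only [newCol]
        rwa [if_neg (by decide)]
      · refine ⟨(AdjLL _ _).2 ⟨hyu, fun h => h01 h.1.symm, fun h => h02 h.2.symm⟩, ?_⟩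
        rw [hΨ]
        simp only [newCol]
        by_cases hab : a = b
        · rw [if_pos ⟨hab, trivial⟩]; rwa [if_pos hab] at hc
        · rw [if_neg (fun h => hab h.1), hb]; rwa [if_neg hab] at hc
  have Du2' : ∀ c, colorDeg G' ψ c (inl (p 2))
      = (if (if a = b then e else b) = c then 1 else 0) + (if d = c then 1 else 0) := by
    intro c
    unfold colorDeg
    apply pair_card (show (inl (p 1) : V ⊕ Fin 2) ≠ inl (p 3) by simp [h13])
    intro W
    constructor
    · rintro ⟨hA, hc⟩
      rcases W with w | i
      · rw [AdjLL] at hA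
        obtain ⟨hAdj, -, -⟩ := hA
        rw [hΨ] at hc
        simp only [newCol] at hc
        rcases (hnbr2 w).1 hAdj with rfl | rfl
        · refine Or.inl ⟨rfl, ?_⟩
          by_cases hab : a = b
          · rw [if_pos ⟨hab, show s(p 2, p 1) = s(p 1, p 2) from Sym2.eq_swap⟩] at hc
            rwa [if_pos hab]
          · rw [if_neg (fun h => hab h.1),
              show s(p 2, p 1) = s(p 1, p 2) from Sym2.eq_swap, hb] at hc
            rwa [if_neg hab]
        · refine Or.inr ⟨rfl, ?_⟩
          rw [if_neg ?_, hd] at hc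
          · exact hc
          · rintro ⟨hab, hs⟩
            rcases Sym2.eq_iff.1 hs with ⟨hx1, -⟩ | ⟨-, hx2⟩
            · exact h12 hx1.symm
            · exact h13 hx2.symm
      · rw [AdjLR] at hA
        rcases hA with ⟨hx, -⟩ | ⟨hx, -⟩
        · exact absurd hx.symm h02
        · exact absurd hx.symm h12
    · rintro (⟨rfl, hc⟩ | ⟨rfl, hc⟩)
      · refine ⟨(AdjLL _ _).2 ⟨hyu.symm, fun h => h02 h.1.symm, fun h => h12 h.1.symm⟩, ?_⟩
        rw [hΨ]
        simp only [newCol]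
        by_cases hab : a = b
        · rw [if_pos ⟨hab, show s(p 2, p 1) = s(p 1, p 2) from Sym2.eq_swap⟩]
          rwa [if_pos hab] at hc
        · rw [if_neg (fun h => hab h.1),
            show s(p 2, p 1) = s(p 1, p 2) from Sym2.eq_swap, hb]
          rwa [if_neg hab] at hc
      · refine ⟨(AdjLL _ _).2 ⟨hu23, fun h => h02 h.1.symm, fun h => h12 h.1.symm⟩, ?_⟩
        rw [hΨ]
        simp only [newCol]
        rw [if_neg ?_, hd]
        · exact hc
        · rintro ⟨hab, hs⟩
          rcases Sym2.eq_iff.1 hs with ⟨hx1, -⟩ | ⟨-, hx2⟩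
          · exact h12 hx1.symm
          · exact h13 hx2.symm
  have D0' : ∀ c, colorDeg G' ψ c (inr 0)
      = (if a = c then 1 else 0) + (if (if a = b then a else e) = c then 1 else 0) := by
    intro c
    unfold colorDeg
    apply pair_card (show (inl (p 0) : V ⊕ Fin 2) ≠ inr 1 by simp)
    intro W
    constructor
    · rintro ⟨hA, hc⟩
      rcases W with w | i
      · have hA' := hA.symm
        rw [AdjLR] at hA'
        rcases hA' with ⟨rfl, -⟩ | ⟨-, h1⟩
        · refine Or.inl ⟨rfl, ?_⟩
          rw [show s((inr 0 : V ⊕ Fin 2), inl (p 0)) = s(inl (p 0), inr 0) from Sym2.eq_swap,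
            hΨ] at hc
          simp only [newCol, if_pos rfl] at hc
          exact hc
        · exact absurd h1 (by decide)
      · have hij : (0 : Fin 2) ≠ i := (AdjRR 0 i).1 hA
        have hi1 : i = 1 := by omega
        subst hi1
        refine Or.inr ⟨rfl, ?_⟩
        rw [hΨ] at hc
        simp only [newCol] at hc
        exact hc
    · rintro (⟨rfl, hc⟩ | ⟨rfl, hc⟩)
      · refine ⟨((AdjLR _ _).2 (Or.inl ⟨rfl, rfl⟩)).symm, ?_⟩
        rw [show s((inr 0 : V ⊕ Fin 2), inl (p 0)) = s(inl (p 0), inr 0) from Sym2.eq_swap, hΨ]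
        simp only [newCol, if_pos rfl]
        exact hc
      · refine ⟨(AdjRR _ _).2 (by decide), ?_⟩
        rw [hΨ]
        simp only [newCol]
        exact hc
  have D1' : ∀ c, colorDeg G' ψ c (inr 1)
      = (if (if a = b then a else e) = c then 1 else 0) + (if e = c then 1 else 0) := by
    intro c
    unfold colorDeg
    apply pair_card (show (inr 0 : V ⊕ Fin 2) ≠ inl (p 1) by simp)
    intro W
    constructor
    · rintro ⟨hA, hc⟩
      rcases W with w | i
      · have hA' := hA.symm
        rw [AdjLR] at hA'
        rcases hA' with ⟨-, h1⟩ | ⟨rfl, -⟩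
        · exact absurd h1 (by decide)
        · refine Or.inr ⟨rfl, ?_⟩
          rw [show s((inr 1 : V ⊕ Fin 2), inl (p 1)) = s(inl (p 1), inr 1) from Sym2.eq_swap,
            hΨ] at hc
          simp only [newCol] at hc
          rwa [if_neg (by decide)] at hc
      · have hij : (1 : Fin 2) ≠ i := (AdjRR 1 i).1 hA
        have hi0 : i = 0 := by omega
        subst hi0
        refine Or.inl ⟨rfl, ?_⟩
        rw [hΨ] at hc
        simp only [newCol] at hc
        exact hc
    · rintro (⟨rfl, hc⟩ | ⟨rfl, hc⟩)
      · refine ⟨(AdjRR _ _).2 (by decide), ?_⟩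
        rw [hΨ]
        simp only [newCol]
        exact hc
      · refine ⟨((AdjLR _ _).2 (Or.inr ⟨rfl, rfl⟩)).symm, ?_⟩
        rw [show s((inr 1 : V ⊕ Fin 2), inl (p 1)) = s(inl (p 1), inr 1) from Sym2.eq_swap, hΨ]
        simp only [newCol]
        rwa [if_neg (by decide)]
  have Claim : ∀ v w, G.Adj v w → ¬(a = b ∧ s(v, w) = s(p 1, p 2)) →
      ¬(v = p 0 ∧ w = p 1) → ¬(v = p 1 ∧ w = p 0) →
      colorDeg G' ψ (φ s(v, w)) (inl v) = colorDeg G φ (φ s(v, w)) v := by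
    intro v w hA hsp hp1 hp2
    by_cases hv0 : v = p 0
    · subst hv0; exact Cx _
    by_cases hv1 : v = p 1
    · subst hv1
      have hw : w = p 2 := by
        rcases (hnbr1 w).1 hA with rfl | rfl
        · exact absurd ⟨rfl, rfl⟩ hp2
        · rfl
      subst hw
      have hab : a ≠ b := fun h => hsp ⟨h, rfl⟩
      rw [hb, Dy' b, Dy b]
      simp [hab, heb] <;> omega
    by_cases hv2 : a = b ∧ v = p 2
    · obtain ⟨hab, hv2'⟩ := hv2
      subst hv2'
      have hw : w = p 3 := by
        rcases (hnbr2 w).1 hA with rfl | rfl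
        · exact absurd ⟨hab, Sym2.eq_swap⟩ hsp
        · rfl
      subst hw
      have hbd' : b ≠ d := fun h => (hbd hab) h.symm
      rw [hd, Du2' d, Du2 d]
      simp [hab, hed, hbd'] <;> omega
    · exact Cgen v hv0 hv1 (fun hab hv => hv2 ⟨hab, hv⟩) _
  have Hmix : ∀ (v : V) (i : Fin 2), G'.Adj (inl v) (inr i) →
      colorDeg G' ψ (ψ s(inl v, inr i)) (inl v) ≠ colorDeg G' ψ (ψ s(inl v, inr i)) (inr i) := by
    intro v i hA
    rw [AdjLR] at hA
    rcases hA with ⟨rfl, rfl⟩ | ⟨rfl, rfl⟩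
    · have hcol : ψ s(inl (p 0), inr 0) = a := by
        rw [hΨ]; simp [newCol]
      rw [hcol, Cx a, D0' a]
      intro hEq
      apply O1
      rw [hEq]
      by_cases hab : a = b
      · simp [hab]
      · have hba : ¬ b = a := fun h => hab h.symm
        simp [hab, hea, hba] <;> omega
    · have hcol : ψ s(inl (p 1), inr 1) = e := by
        rw [hΨ]; simp only [newCol]; rw [if_neg (by decide)]
      rw [hcol, Dy' e, D1' e]
      by_cases hab : a = b <;>
        simp [hab, hae, hbe] <;> omega
  rintro (v | i) (w | j) hUW
  · -- inl inl
    rw [hΨ]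
    by_cases hsp : a = b ∧ s(v, w) = s(p 1, p 2)
    · have hc : newCol φ (p 1) (p 2) (a = b) a e (inl v) (inl w) = e := by
        simp only [newCol]; rw [if_pos hsp]
      rw [hc]
      have hab := hsp.1
      rcases Sym2.eq_iff.1 hsp.2 with ⟨rfl, rfl⟩ | ⟨rfl, rfl⟩
      · rw [Dy' e, Du2' e]
        simp [hab, hde] <;> omega
      · rw [Du2' e, Dy' e]
        simp [hab, hde] <;> omega
    · have hc : newCol φ (p 1) (p 2) (a = b) a e (inl v) (inl w) = φ s(v, w) := by
        simp only [newCol]; rw [if_neg hsp]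
      rw [hc]
      rw [AdjLL] at hUW
      obtain ⟨hA, hq1, hq2⟩ := hUW
      have E1 := Claim v w hA hsp hq1 hq2
      have hsp' : ¬(a = b ∧ s(w, v) = s(p 1, p 2)) := by
        rwa [show s(w, v) = s(v, w) from Sym2.eq_swap]
      have E2 := Claim w v hA.symm hsp' (fun h => hq2 ⟨h.2, h.1⟩) (fun h => hq1 ⟨h.2, h.1⟩)
      rw [show s(w, v) = s(v, w) from Sym2.eq_swap] at E2
      rw [E1, E2]
      exact hφ hA
  · exact Hmix v j hUW
  · rw [show s((inr i : V ⊕ Fin 2), inl w) = s(inl w, inr i) from Sym2.eq_swap]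
    exact (Hmix _ _ hUW.symm).symm
  · -- inr inr
    have hij : i ≠ j := (AdjRR i j).1 hUW
    have hcol : ψ s((inr i : V ⊕ Fin 2), inr j) = if a = b then a else e := by
      rw [hΨ]; simp only [newCol]
    rw [hcol]
    have h2 : ∀ m : Fin 2, m = 0 ∨ m = 1 := by decide
    rcases h2 i with rfl | rfl <;> rcases h2 j with rfl | rfl
    · exact absurd rfl hij
    · rw [D0', D1']
      by_cases hab : a = b <;>
        simp [hab, heb, hae] <;> omega
    · rw [D1', D0']
      by_cases hab : a = b <;>
        simp [hab, heb, hae] <;> omega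
    · exact absurd rfl hij
end

section
/- Every tree rooted at a leaf (a shrub) admits a 2-edge coloring that is an almost locally irregular coloring: either the coloring is locally irregular, or the only locally regular edge is the root edge and in that case the root edge is not adjacent to any other edge of the same color. -/
/-!
Orient the tree away from `r`. If a vertex `u ≠ r` with `m` children gives the colour of its
parent edge to a set `A` of `t` children and the other colour to the rest, its two colour
degrees are `t + 1` and `m - t`. Each child `w`, coloured the same way inside its own subtree,
has degree `b w` in the colour of the edge `uw`, and `b w` depends only on that subtree. A
counting argument finds `A` with `b ≠ t + 1` on `A` and `b ≠ m - t` off `A`, so choosing the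
sets `A` bottom-up and then the colours top-down makes every edge other than `rr'` irregular.
At the root edge the degree of `r` is `1` and that of `r'` is `t + 1`, so it is irregular as
well unless `A = ∅` at `r'`, and then no other edge at `r'` has its colour.
-/

open Finset

lemma exists_threshold (m : ℕ) (cnt : ℕ → ℕ) (hcnt : ∑ s ∈ range (m + 2), cnt s ≤ m) :
    ∃ t ≤ m, cnt (m - t) ≤ t ∧ t + cnt (t + 1) ≤ m ∧ (2 * t + 1 = m → cnt (t + 1) = 0) := by
  by_contra! hfail
  simp only [imp_iff_not_or, not_le] at hfail
  rw [sum_range_succ, sum_range_succ'] at hcnt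
  have htop : 1 ≤ cnt (m + 1) := by
    have := hfail m
    simp only [Nat.sub_self] at this
    omega
  -- the failures at `s` and at `m - 1 - s` put two items on the values `s + 1` and `m - s`
  have hpair : ∀ s ∈ range m, 2 ≤ cnt (s + 1) + cnt (m - s) := by
    intro s hs
    rw [mem_range] at hs
    have h₁ := hfail s
    have h₂ := hfail (m - 1 - s)
    rw [show m - (m - 1 - s) = s + 1 by omega, show m - 1 - s + 1 = m - s by omega] at h₂
    have hmid : 2 * s + 1 = m → cnt (m - s) = cnt (s + 1) := fun h => by
      rw [show m - s = s + 1 by omega]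
    omega
  have hreflect : ∑ s ∈ range m, cnt (m - s) = ∑ s ∈ range m, cnt (s + 1) := by
    rw [← sum_range_reflect (fun s => cnt (s + 1))]
    exact sum_congr rfl fun s hs => by rw [mem_range] at hs; congr 1; omega
  have hsum := sum_le_sum hpair
  rw [sum_add_distrib, hreflect, sum_const, card_range, smul_eq_mul] at hsum
  omega

lemma exists_avoiding_subset {ι : Type*} [DecidableEq ι] (W : Finset ι) (b : ι → ℕ) :
    ∃ A ⊆ W, (∀ w ∈ A, b w ≠ #A + 1) ∧ ∀ w ∈ W \ A, b w ≠ #W - #A := by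
  obtain ⟨t, -, hY, hX, hmid⟩ := exists_threshold #W (fun s => #{w ∈ W | b w = s})
    ((sum_card_fiberwise_eq_card_filter W _ b).trans_le (card_filter_le _ _))
  have hYX : {w ∈ W | b w = #W - t} ⊆ W \ {w ∈ W | b w = t + 1} := by
    intro w hw
    simp only [mem_sdiff, mem_filter] at hw ⊢
    refine ⟨hw.1, fun hwX => ?_⟩
    have hempty := card_eq_zero.mp (hmid (by omega))
    exact (eq_empty_iff_forall_notMem.mp hempty) w (mem_filter.mpr hwX)
  obtain ⟨A, hYA, hAX, rfl⟩ := exists_subsuperset_card_eq hYX hY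
    (by rw [card_sdiff_of_subset (filter_subset _ _)]; omega)
  refine ⟨A, hAX.trans sdiff_subset, fun w hw hb => ?_, fun w hw hb => ?_⟩
  · exact (mem_sdiff.mp (hAX hw)).2 (mem_filter.mpr ⟨(mem_sdiff.mp (hAX hw)).1, hb⟩)
  · exact (mem_sdiff.mp hw).2 (hYA (mem_filter.mpr ⟨(mem_sdiff.mp hw).1, hb⟩))

namespace SimpleGraph

variable {V : Type*} {G : SimpleGraph V} {r u v w : V}

lemma exists_adj_dist_lt (h : 0 < G.dist r v) : ∃ w, G.Adj w v ∧ G.dist r w < G.dist r v := by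
  obtain ⟨p, hp⟩ := (Reachable.of_dist_ne_zero h.ne').exists_walk_length_eq_dist
  have hnil : ¬ p.Nil := fun hnil => by rw [Walk.length_eq_zero_iff.mpr hnil] at hp; omega
  refine ⟨p.penultimate, p.adj_penultimate hnil, ?_⟩
  have := dist_le p.dropLast
  rw [Walk.length_dropLast] at this
  omega

open Classical in
noncomputable def parent (G : SimpleGraph V) (r v : V) : V :=
  if h : ∃ w, G.Adj w v ∧ G.dist r w < G.dist r v then h.choose else v

lemma adj_parent_and_dist_parent_lt (h : 0 < G.dist r v) :
    G.Adj (G.parent r v) v ∧ G.dist r (G.parent r v) < G.dist r v := by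
  have hex := exists_adj_dist_lt h
  rw [parent, dif_pos hex]
  exact hex.choose_spec

lemma IsTree.eq_of_adj_of_dist_lt (hT : G.IsTree) {w₁ w₂ : V} (h₁ : G.Adj w₁ v) (h₂ : G.Adj w₂ v)
    (hd₁ : G.dist r w₁ < G.dist r v) (hd₂ : G.dist r w₂ < G.dist r v) : w₁ = w₂ := by
  classical
  obtain ⟨p, hp, -⟩ := hT.existsUnique_path r v
  -- a shortest path to such a neighbour avoids `v`, so the path to `v` passes through it
  have hpen : ∀ w, G.Adj w v → G.dist r w < G.dist r v → w = p.penultimate := by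
    intro w hw hd
    obtain ⟨q, hq, hql⟩ := (hT.connected r w).exists_path_of_dist
    have hv : v ∉ q.support := fun hv => by
      have := dist_le (q.takeUntil v hv)
      have := q.length_takeUntil_le_length hv
      omega
    exact hT.isAcyclic.eq_penultimate_of_adj_end hp hw.symm
      (hT.isAcyclic.mem_support_of_ne_mem_support_of_adj_of_isPath hp hq hw.symm hv)
  rw [hpen w₁ h₁ hd₁, hpen w₂ h₂ hd₂]

lemma IsTree.parent_eq (hT : G.IsTree) (h : G.Adj w v) (hd : G.dist r w < G.dist r v) :
    G.parent r v = w :=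
  have hpar := adj_parent_and_dist_parent_lt (hd.trans_le' (Nat.zero_le _))
  hT.eq_of_adj_of_dist_lt hpar.1 h hpar.2 hd

/-- Ties, which do not occur in a tree, get `default`. -/
noncomputable def farEndColoring {α : Type*} [Inhabited α] (G : SimpleGraph V) (r : V)
    (c : V → α) : Sym2 V → α :=
  Sym2.lift ⟨fun x y => if G.dist r x < G.dist r y then c y
    else if G.dist r y < G.dist r x then c x else default, fun x y => by
      dsimp only
      split_ifs <;> first | rfl | omega⟩

lemma farEndColoring_of_dist_lt {α : Type*} [Inhabited α] {c : V → α} {x y : V}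
    (h : G.dist r x < G.dist r y) : G.farEndColoring r c s(x, y) = c y := by
  simp [farEndColoring, h]

section Finite

variable [Fintype V] [DecidableRel G.Adj]

lemma dist_lt_card (G : SimpleGraph V) (u v : V) : G.dist u v < Fintype.card V := by
  by_cases h : G.Reachable u v
  · obtain ⟨p, hp, hpl⟩ := h.exists_path_of_dist
    exact hpl ▸ hp.length_lt
  · rw [dist_eq_zero_of_not_reachable h]
    exact Fintype.card_pos_iff.mpr ⟨u⟩

noncomputable def children (G : SimpleGraph V) [DecidableRel G.Adj] (r u : V) : Finset V :=
  {w ∈ G.neighborFinset u | G.dist r u < G.dist r w}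

lemma mem_children : w ∈ G.children r u ↔ G.Adj u w ∧ G.dist r u < G.dist r w := by
  simp [children]

lemma IsTree.mem_children_or_mem_children (hT : G.IsTree) (h : G.Adj u v) :
    v ∈ G.children r u ∨ u ∈ G.children r v := by
  simp only [mem_children]
  rcases hT.dist_eq_dist_add_one_of_adj r h with hd | hd
  · exact .inr ⟨h.symm, by omega⟩
  · exact .inl ⟨h, by omega⟩

lemma IsTree.parent_of_mem_children (hT : G.IsTree) (hw : w ∈ G.children r u) :
    G.parent r w = u := by
  rw [mem_children] at hw
  exact hT.parent_eq hw.1 hw.2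

lemma parent_notMem_children (h : 0 < G.dist r u) : G.parent r u ∉ G.children r u := by
  rw [mem_children]
  have := (adj_parent_and_dist_parent_lt h).2
  omega

lemma colorDeg_eq_card_filter {α : Type*} [DecidableEq α] (φ : Sym2 V → α) (β : α) (u : V) :
    colorDeg G φ β u = #{w ∈ G.neighborFinset u | φ s(u, w) = β} := by
  rw [colorDeg, Nat.card_eq_fintype_card, Fintype.card_subtype, neighborFinset_eq_filter,
    filter_filter]

lemma colorDeg_farEndColoring_root {α : Type*} [Inhabited α] [DecidableEq α] {c : V → α}
    (β : α) : colorDeg G (G.farEndColoring r c) β r = #{w ∈ G.neighborFinset r | c w = β} := by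
  rw [colorDeg_eq_card_filter]
  refine congrArg card (filter_congr fun w hw => ?_)
  have hd : G.dist r w = 1 := dist_eq_one_iff_adj.mpr ((mem_neighborFinset ..).mp hw)
  rw [farEndColoring_of_dist_lt (by rw [dist_self, hd]; exact one_pos)]

lemma neighborFinset_eq_singleton_of_degree_eq_one {r' : V} (hr : G.degree r = 1)
    (hrr' : G.Adj r r') : G.neighborFinset r = {r'} :=
  (eq_of_subset_of_card_le (singleton_subset_iff.mpr ((mem_neighborFinset ..).mpr hrr'))
    (by rw [card_neighborFinset_eq_degree, hr, card_singleton])).symm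

variable [DecidableEq V]

lemma IsTree.neighborFinset_eq_insert_parent (hT : G.IsTree) (hu : u ≠ r) :
    G.neighborFinset u = insert (G.parent r u) (G.children r u) := by
  have hpar := adj_parent_and_dist_parent_lt (hT.connected.pos_dist_of_ne hu.symm)
  ext w
  rw [mem_insert, mem_neighborFinset, mem_children]
  constructor
  · intro h
    rcases hT.dist_eq_dist_add_one_of_adj r h with hd | hd
    · exact .inl (hT.eq_of_adj_of_dist_lt hpar.1 h.symm hpar.2 (by omega)).symm
    · exact .inr ⟨h, by omega⟩
  · rintro (rfl | h)
    exacts [hpar.1.symm, h.1]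

lemma IsTree.colorDeg_farEndColoring {α : Type*} [Inhabited α] [DecidableEq α] {c : V → α}
    (hT : G.IsTree) (hu : u ≠ r) (β : α) :
    colorDeg G (G.farEndColoring r c) β u =
      #{w ∈ G.children r u | c w = β} + if c u = β then 1 else 0 := by
  have hpos := hT.connected.pos_dist_of_ne hu.symm
  have hpar : G.farEndColoring r c s(u, G.parent r u) = c u := by
    rw [Sym2.eq_swap, farEndColoring_of_dist_lt (adj_parent_and_dist_parent_lt hpos).2]
  have hchildren : {w ∈ G.children r u | G.farEndColoring r c s(u, w) = β} =
      {w ∈ G.children r u | c w = β} :=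
    filter_congr fun w hw => by rw [farEndColoring_of_dist_lt (mem_children.mp hw).2]
  rw [colorDeg_eq_card_filter, hT.neighborFinset_eq_insert_parent hu, filter_insert, hpar,
    hchildren]
  split_ifs
  · rw [card_insert_of_notMem fun h => parent_notMem_children hpos (mem_filter.mp h).1]
  · rfl

/-- The children of `u` whose edge to `u` gets the colour of the edge from `u` to its parent;
`#(G.sameColorChildren r w) + 1` is the degree of `w` in the colour of that edge. -/
noncomputable def sameColorChildren (G : SimpleGraph V) [DecidableRel G.Adj] (r u : V) :
    Finset V :=
  (exists_avoiding_subset (G.children r u) fun w =>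
    if h : w ∈ G.children r u then #(G.sameColorChildren r w) + 1 else 0).choose
termination_by Fintype.card V - G.dist r u
decreasing_by
  all_goals
    have := (mem_children.mp h).2
    have := G.dist_lt_card r w
    omega

lemma sameColorChildren_spec :
    G.sameColorChildren r u ⊆ G.children r u ∧
    (∀ w ∈ G.sameColorChildren r u, #(G.sameColorChildren r w) ≠ #(G.sameColorChildren r u)) ∧
    ∀ w ∈ G.children r u \ G.sameColorChildren r u,
      #(G.sameColorChildren r w) + 1 ≠ #(G.children r u) - #(G.sameColorChildren r u) := by
  have h := (exists_avoiding_subset (G.children r u) fun w =>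
    if h : w ∈ G.children r u then #(G.sameColorChildren r w) + 1 else 0).choose_spec
  rw [← sameColorChildren] at h
  obtain ⟨hsub, hin, hout⟩ := h
  refine ⟨hsub, fun w hw => ?_, fun w hw => ?_⟩
  · simpa [dif_pos (hsub hw)] using hin w hw
  · simpa [dif_pos (mem_sdiff.mp hw).1] using hout w hw

noncomputable def parentEdgeColor (G : SimpleGraph V) [DecidableRel G.Adj] (r v : V) : Fin 2 :=
  if 1 < G.dist r v then
    if v ∈ G.sameColorChildren r (G.parent r v) then G.parentEdgeColor r (G.parent r v)
    else G.parentEdgeColor r (G.parent r v) + 1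
  else 0
termination_by G.dist r v
decreasing_by all_goals exact (adj_parent_and_dist_parent_lt (by omega)).2

noncomputable def shrubColoring (G : SimpleGraph V) [DecidableRel G.Adj] (r : V) :
    Sym2 V → Fin 2 :=
  G.farEndColoring r (G.parentEdgeColor r)

lemma shrubColoring_of_dist_lt {x y : V} (h : G.dist r x < G.dist r y) :
    G.shrubColoring r s(x, y) = G.parentEdgeColor r y :=
  farEndColoring_of_dist_lt h

lemma IsTree.parentEdgeColor_of_mem_children (hT : G.IsTree) (hu : u ≠ r)
    (hw : w ∈ G.children r u) :
    G.parentEdgeColor r w = if w ∈ G.sameColorChildren r u then G.parentEdgeColor r u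
      else G.parentEdgeColor r u + 1 := by
  have := hT.connected.pos_dist_of_ne hu.symm
  have := (mem_children.mp hw).2
  rw [parentEdgeColor, if_pos (by omega), hT.parent_of_mem_children hw]

lemma IsTree.colorDeg_shrubColoring_self (hT : G.IsTree) (hu : u ≠ r) :
    colorDeg G (G.shrubColoring r) (G.parentEdgeColor r u) u =
      #(G.sameColorChildren r u) + 1 := by
  have hfilter : {w ∈ G.children r u | G.parentEdgeColor r w = G.parentEdgeColor r u} =
      G.sameColorChildren r u := by
    ext w
    rw [mem_filter]
    constructor
    · rintro ⟨hw, hc⟩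
      rw [hT.parentEdgeColor_of_mem_children hu hw] at hc
      split_ifs at hc with h
      exacts [h, absurd hc (by simp)]
    · intro hw
      have hw' := sameColorChildren_spec.1 hw
      exact ⟨hw', by rw [hT.parentEdgeColor_of_mem_children hu hw', if_pos hw]⟩
  rw [shrubColoring, hT.colorDeg_farEndColoring hu, if_pos rfl, hfilter]

lemma IsTree.colorDeg_shrubColoring_add_one (hT : G.IsTree) (hu : u ≠ r) :
    colorDeg G (G.shrubColoring r) (G.parentEdgeColor r u + 1) u =
      #(G.children r u) - #(G.sameColorChildren r u) := by
  have hfilter : {w ∈ G.children r u | G.parentEdgeColor r w = G.parentEdgeColor r u + 1} =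
      G.children r u \ G.sameColorChildren r u := by
    ext w
    rw [mem_filter, mem_sdiff]
    refine and_congr_right fun hw => ?_
    rw [hT.parentEdgeColor_of_mem_children hu hw]
    split_ifs with h <;> simp [h]
  rw [shrubColoring, hT.colorDeg_farEndColoring hu, if_neg (by simp), hfilter,
    card_sdiff_of_subset sameColorChildren_spec.1, add_zero]

lemma IsTree.colorDeg_shrubColoring_ne_of_mem_children (hT : G.IsTree) (hu : u ≠ r)
    (hw : w ∈ G.children r u) :
    colorDeg G (G.shrubColoring r) (G.shrubColoring r s(u, w)) u ≠
      colorDeg G (G.shrubColoring r) (G.shrubColoring r s(u, w)) w := by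
  have hwr : w ≠ r := by
    rintro rfl
    have := (mem_children.mp hw).2
    rw [dist_self] at this
    omega
  obtain ⟨-, hin, hout⟩ := sameColorChildren_spec (G := G) (r := r) (u := u)
  rw [shrubColoring_of_dist_lt (mem_children.mp hw).2, hT.colorDeg_shrubColoring_self hwr,
    hT.parentEdgeColor_of_mem_children hu hw]
  split_ifs with h
  · rw [hT.colorDeg_shrubColoring_self hu]
    exact fun heq => hin w h (by omega)
  · rw [hT.colorDeg_shrubColoring_add_one hu]
    exact (hout w (mem_sdiff.mpr ⟨hw, h⟩)).symm

lemma IsTree.colorDeg_shrubColoring_ne (hT : G.IsTree) (h : G.Adj v w) (hv : v ≠ r)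
    (hw : w ≠ r) :
    colorDeg G (G.shrubColoring r) (G.shrubColoring r s(v, w)) v ≠
      colorDeg G (G.shrubColoring r) (G.shrubColoring r s(v, w)) w := by
  rcases hT.mem_children_or_mem_children (r := r) h with hc | hc
  · exact hT.colorDeg_shrubColoring_ne_of_mem_children hv hc
  · rw [Sym2.eq_swap]
    exact (hT.colorDeg_shrubColoring_ne_of_mem_children hw hc).symm

lemma IsTree.colorDeg_shrubColoring_ne_of_ne_root_edge {r' : V} (hT : G.IsTree)
    (hnbr : G.neighborFinset r = {r'}) (h : G.Adj v w) (hne : s(v, w) ≠ s(r, r')) :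
    colorDeg G (G.shrubColoring r) (G.shrubColoring r s(v, w)) v ≠
      colorDeg G (G.shrubColoring r) (G.shrubColoring r s(v, w)) w := by
  have hnr : ∀ ⦃x⦄, G.Adj r x → x = r' := fun x hx => by
    simpa [hnbr] using (mem_neighborFinset ..).mpr hx
  refine hT.colorDeg_shrubColoring_ne h ?_ ?_
  · rintro rfl
    exact hne (by rw [hnr h])
  · rintro rfl
    exact hne (by rw [hnr h.symm, Sym2.eq_swap])

lemma shrubColoring_of_adj_root {r' : V} (h : G.Adj r r') :
    G.shrubColoring r s(r, r') = G.parentEdgeColor r r' :=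
  shrubColoring_of_dist_lt (by rw [dist_self, dist_eq_one_iff_adj.mpr h]; exact one_pos)

lemma IsTree.colorDeg_shrubColoring_root_ne {r' : V} (hT : G.IsTree)
    (hnbr : G.neighborFinset r = {r'}) (hA : (G.sameColorChildren r r').Nonempty) :
    colorDeg G (G.shrubColoring r) (G.shrubColoring r s(r, r')) r ≠
      colorDeg G (G.shrubColoring r) (G.shrubColoring r s(r, r')) r' := by
  have hrr' : G.Adj r r' := (mem_neighborFinset ..).mp (hnbr ▸ mem_singleton_self r')
  rw [shrubColoring_of_adj_root hrr', hT.colorDeg_shrubColoring_self hrr'.ne', shrubColoring,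
    colorDeg_farEndColoring_root, hnbr, filter_singleton, if_pos rfl, card_singleton]
  have := hA.card_pos
  omega

lemma IsTree.shrubColoring_ne_of_sameColorChildren_eq_empty {r' x : V} (hT : G.IsTree)
    (hrr' : G.Adj r r') (hA : G.sameColorChildren r r' = ∅) (hx : G.Adj r' x) (hxr : x ≠ r) :
    G.shrubColoring r s(r', x) ≠ G.shrubColoring r s(r, r') := by
  have hpar : G.parent r r' = r :=
    hT.parent_eq hrr' (by rw [dist_self, dist_eq_one_iff_adj.mpr hrr']; exact one_pos)
  have hxc : x ∈ G.children r r' := (hT.mem_children_or_mem_children hx).resolve_right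
    fun h => hxr ((hT.parent_of_mem_children h).symm.trans hpar)
  rw [shrubColoring_of_adj_root hrr', shrubColoring_of_dist_lt (mem_children.mp hxc).2,
    hT.parentEdgeColor_of_mem_children hrr'.ne' hxc, hA, if_neg (notMem_empty x)]
  simp

end Finite

end SimpleGraph

/-- Every shrub (a tree rooted at a leaf r, with root edge r r') admits a 2-edge
coloring that is almost locally irregular: either the coloring is locally
irregular, or every edge other than the root edge is locally irregular and the
root edge is not adjacent to any other edge of the same color. -/
theorem shrub_admits_two_aliec {V : Type*} [Fintype V] [DecidableEq V]
    (G : SimpleGraph V) [DecidableRel G.Adj] (hT : G.IsTree)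
    (r r' : V) (hr : G.degree r = 1) (hrr' : G.Adj r r') :
    ∃ φ : Sym2 V → Fin 2,
      (∀ ⦃v w : V⦄, G.Adj v w → s(v, w) ≠ s(r, r') →
        colorDeg G φ (φ s(v, w)) v ≠ colorDeg G φ (φ s(v, w)) w) ∧
      (IsLocIrrColoring G φ ∨
        ∀ x, G.Adj r' x → x ≠ r → φ s(r', x) ≠ φ s(r, r')) := by
  have hnbr := SimpleGraph.neighborFinset_eq_singleton_of_degree_eq_one hr hrr'
  have hnonroot : ∀ ⦃v w : V⦄, G.Adj v w → s(v, w) ≠ s(r, r') →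
      colorDeg G (G.shrubColoring r) (G.shrubColoring r s(v, w)) v ≠
        colorDeg G (G.shrubColoring r) (G.shrubColoring r s(v, w)) w :=
    fun _ _ h hne => hT.colorDeg_shrubColoring_ne_of_ne_root_edge hnbr h hne
  refine ⟨G.shrubColoring r, hnonroot, ?_⟩
  rcases (G.sameColorChildren r r').eq_empty_or_nonempty with hA | hA
  · exact .inr fun x hx hxr => hT.shrubColoring_ne_of_sameColorChildren_eq_empty hrr' hA hx hxr
  · refine .inl fun v w h => ?_
    by_cases he : s(v, w) = s(r, r')
    · rcases Sym2.eq_iff.mp he with ⟨rfl, rfl⟩ | ⟨rfl, rfl⟩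
      · exact hT.colorDeg_shrubColoring_root_ne hnbr hA
      · rw [Sym2.eq_swap]
        exact (hT.colorDeg_shrubColoring_root_ne hnbr hA).symm
    · exact hnonroot h he
end

section
/- For every tree T that admits a locally irregular edge coloring, the locally irregular chromatic index of T is at most 3. -/
namespace LocIrrAux
set_option linter.unusedSectionVars false

open SimpleGraph Finset Function

attribute [local instance] Classical.propDecidable

variable {V : Type*} [Fintype V]

section Rooted

variable (G : SimpleGraph V) (r : V)

/-- depth of a vertex relative to root `r`. -/
noncomputable def depth (v : V) : ℕ := G.dist r v

/-- parent of a vertex (junk value `v` at the root). -/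
noncomputable def par (v : V) : V :=
  if h : ∃ w, G.Adj v w ∧ depth G r w + 1 = depth G r v then h.choose else v

/-- children of a vertex. -/
noncomputable def children (v : V) : Finset V :=
  Finset.univ.filter (fun w => G.Adj v w ∧ depth G r w = depth G r v + 1)

/-- `a` is an ancestor (possibly equal) of `w`. -/
def isAnc (a w : V) : Prop := ∃ i, (par G r)^[i] w = a

/-- descendants (including itself). -/
noncomputable def desc (v : V) : Finset V :=
  Finset.univ.filter (fun w => isAnc G r v w)

variable {G r}

lemma mem_children {v w : V} :
    w ∈ children G r v ↔ G.Adj v w ∧ depth G r w = depth G r v + 1 := by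
  simp [children]

lemma mem_desc {v w : V} : w ∈ desc G r v ↔ isAnc G r v w := by
  simp [desc]

variable (hG : G.IsTree)
include hG

lemma path_length_eq {v w : V} (p : G.Walk v w) (hp : p.IsPath) :
    p.length = G.dist v w := by
  obtain ⟨q, hq, hql⟩ := hG.isConnected.exists_path_of_dist v w
  have : (⟨p, hp⟩ : G.Path v w) = ⟨q, hq⟩ := hG.IsAcyclic.path_unique _ _
  rw [Subtype.ext_iff] at this
  simp only at this
  rw [this, hql]

lemma depth_eq_zero {v : V} : depth G r v = 0 ↔ v = r := by
  rw [depth, hG.isConnected.dist_eq_zero_iff, eq_comm]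

lemma dist_le_of_mem_support {v w u : V} (p : G.Walk v w) (hu : u ∈ p.support) :
    G.dist v u ≤ p.length :=
  le_trans (SimpleGraph.dist_le _) (p.length_takeUntil_le hu)

lemma adj_depth {v w : V} (h : G.Adj v w) :
    depth G r w = depth G r v + 1 ∨ depth G r v = depth G r w + 1 := by
  have h1 : G.dist r w ≤ G.dist r v + 1 := by
    have := hG.isConnected.dist_triangle (u := r) (v := v) (w := w)
    rwa [(SimpleGraph.dist_eq_one_iff_adj).2 h] at this
  have h2 : G.dist r v ≤ G.dist r w + 1 := by
    have := hG.isConnected.dist_triangle (u := r) (v := w) (w := v)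
    rwa [(SimpleGraph.dist_eq_one_iff_adj).2 h.symm] at this
  have hne : G.dist r v ≠ G.dist r w := by
    intro heq
    obtain ⟨p, hp, hpl⟩ := hG.isConnected.exists_path_of_dist r v
    by_cases hw : w ∈ p.support
    · -- then dist r w ≤ len(take), dist w v ≤ len(drop), sum = dist r v
      have ht : G.dist r w ≤ (p.takeUntil w hw).length := SimpleGraph.dist_le _
      have hd : G.dist w v ≤ (p.dropUntil w hw).length := SimpleGraph.dist_le _
      have hsum : (p.takeUntil w hw).length + (p.dropUntil w hw).length = p.length := by
        have := congrArg SimpleGraph.Walk.length (p.take_spec hw)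
        rwa [SimpleGraph.Walk.length_append] at this
      have hwv : G.dist w v = 1 := (SimpleGraph.dist_eq_one_iff_adj).2 h.symm
      have htri : G.dist r v ≤ G.dist r w + G.dist w v :=
        hG.isConnected.dist_triangle
      omega
    · have hq : (p.concat h).IsPath := by
        rw [← SimpleGraph.Walk.isPath_reverse_iff, SimpleGraph.Walk.reverse_concat]
        rw [SimpleGraph.Walk.cons_isPath_iff]
        refine ⟨SimpleGraph.Walk.isPath_reverse_iff _ |>.2 hp, ?_⟩
        rwa [SimpleGraph.Walk.support_reverse, List.mem_reverse]
      have := path_length_eq hG _ hq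
      rw [SimpleGraph.Walk.length_concat, hpl] at this
      omega
  simp only [depth]
  omega

lemma exists_par {v : V} (hv : v ≠ r) :
    ∃ w, G.Adj v w ∧ depth G r w + 1 = depth G r v := by
  have hd : 0 < G.dist r v := hG.isConnected.pos_dist_of_ne (Ne.symm hv)
  obtain ⟨p, hp, hpl⟩ := hG.isConnected.exists_path_of_dist r v
  cases hrev : p.reverse with
  | nil =>
    exfalso
    have h0 : p.reverse.length = 0 := by rw [hrev]; rfl
    rw [SimpleGraph.Walk.length_reverse] at h0
    omega
  | cons hadj q =>
    rename_i w
    refine ⟨w, hadj, ?_⟩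
    have hqp : q.IsPath := by
      have : (SimpleGraph.Walk.cons hadj q).IsPath := by
        rw [← hrev]; exact (SimpleGraph.Walk.isPath_reverse_iff _).2 hp
      exact (SimpleGraph.Walk.cons_isPath_iff _ _).1 this |>.1
    have hql : q.length + 1 = G.dist r v := by
      have := congrArg SimpleGraph.Walk.length hrev
      rw [SimpleGraph.Walk.length_reverse, SimpleGraph.Walk.length_cons] at this
      omega
    have : q.length = G.dist w r := path_length_eq hG q hqp
    rw [SimpleGraph.dist_comm] at this
    simp only [depth]
    omega

lemma par_spec {v : V} (hv : v ≠ r) :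
    G.Adj v (par G r v) ∧ depth G r (par G r v) + 1 = depth G r v := by
  rw [par, dif_pos (exists_par hG hv)]
  exact (exists_par hG hv).choose_spec

lemma par_unique {v w : V} (h : G.Adj v w) (hd : depth G r w + 1 = depth G r v) :
    w = par G r v := by
  have hv : v ≠ r := by
    intro hv
    have h0 : depth G r v = 0 := by rw [hv]; exact (depth_eq_zero hG).2 rfl
    omega
  obtain ⟨hadj', hd'⟩ := par_spec hG hv
  set w' := par G r v
  obtain ⟨p, hp, hpl⟩ := hG.isConnected.exists_path_of_dist r w
  obtain ⟨p', hp', hpl'⟩ := hG.isConnected.exists_path_of_dist r w'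
  have hvp : v ∉ p.support := by
    intro hmem
    have := dist_le_of_mem_support hG p hmem
    rw [hpl] at this
    simp only [depth] at hd
    omega
  have hvp' : v ∉ p'.support := by
    intro hmem
    have := dist_le_of_mem_support hG p' hmem
    rw [hpl'] at this
    simp only [depth] at hd'
    omega
  have hq : (p.concat h.symm).IsPath := by
    rw [← SimpleGraph.Walk.isPath_reverse_iff, SimpleGraph.Walk.reverse_concat,
      SimpleGraph.Walk.cons_isPath_iff]
    exact ⟨(SimpleGraph.Walk.isPath_reverse_iff _).2 hp, by
      rwa [SimpleGraph.Walk.support_reverse, List.mem_reverse]⟩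
  have hq' : (p'.concat hadj'.symm).IsPath := by
    rw [← SimpleGraph.Walk.isPath_reverse_iff, SimpleGraph.Walk.reverse_concat,
      SimpleGraph.Walk.cons_isPath_iff]
    exact ⟨(SimpleGraph.Walk.isPath_reverse_iff _).2 hp', by
      rwa [SimpleGraph.Walk.support_reverse, List.mem_reverse]⟩
  have heq : (⟨p.concat h.symm, hq⟩ : G.Path r v) = ⟨p'.concat hadj'.symm, hq'⟩ :=
    hG.IsAcyclic.path_unique _ _
  rw [Subtype.ext_iff] at heq
  simp only at heq
  obtain ⟨hv2, -⟩ := SimpleGraph.Walk.concat_inj heq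
  exact hv2

omit hG in
lemma depth_root : depth G r r = 0 := by rw [depth, SimpleGraph.dist_self]

omit hG in
lemma par_root : par G r r = r := by
  rw [par, dif_neg]
  rintro ⟨w, -, hw⟩
  rw [depth_root] at hw
  omega

lemma child_ne_root {v w : V} (hw : w ∈ children G r v) : w ≠ r := by
  obtain ⟨-, hd⟩ := mem_children.1 hw
  intro h
  rw [h, depth_root] at hd
  omega

lemma par_of_child {v w : V} (hw : w ∈ children G r v) : par G r w = v := by
  rw [mem_children] at hw
  exact (par_unique hG hw.1.symm (by omega)).symm

lemma mem_children_of_par {w : V} (hw : w ≠ r) : w ∈ children G r (par G r w) := by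
  obtain ⟨hadj, hd⟩ := par_spec hG hw
  rw [mem_children]
  exact ⟨hadj.symm, by omega⟩

lemma adj_iff {v w : V} (hv : v ≠ r) :
    G.Adj v w ↔ w = par G r v ∨ w ∈ children G r v := by
  constructor
  · intro h
    rcases adj_depth hG h with hd | hd
    · exact Or.inr (mem_children.2 ⟨h, hd⟩)
    · exact Or.inl (par_unique hG h (by omega))
  · rintro (rfl | h)
    · exact (par_spec hG hv).1
    · exact (mem_children.1 h).1

lemma adj_root_iff {w : V} : G.Adj r w ↔ w ∈ children G r r := by
  constructor
  · intro h
    rcases adj_depth hG h with hd | hd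
    · exact mem_children.2 ⟨h, hd⟩
    · exfalso; have : depth G r r = 0 := depth_root; omega
  · exact fun h => (mem_children.1 h).1

lemma par_not_mem_children {v : V} (hv : v ≠ r) : par G r v ∉ children G r v := by
  intro h
  rw [mem_children] at h
  have := (par_spec hG hv).2
  omega

omit hG in
lemma par_iter_root (i : ℕ) : (par G r)^[i] r = r := by
  induction i with
  | zero => rfl
  | succ n ih => rw [Function.iterate_succ_apply', ih, par_root]

lemma iter_depth_eq_root (v : V) : (par G r)^[depth G r v] v = r := by
  generalize hn : depth G r v = n
  induction n generalizing v with
  | zero => exact (depth_eq_zero hG).1 hn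
  | succ n ih =>
    have hv : v ≠ r := by
      intro h; rw [h, depth_root] at hn; omega
    have hd : depth G r (par G r v) = n := by
      have := (par_spec hG hv).2; omega
    rw [Function.iterate_succ_apply]
    exact ih _ hd

lemma iter_root_of_ge {v : V} {i : ℕ} (hi : depth G r v ≤ i) : (par G r)^[i] v = r := by
  have : i = (i - depth G r v) + depth G r v := by omega
  rw [this, Function.iterate_add_apply, iter_depth_eq_root hG, par_iter_root]

omit hG in
lemma isAnc_refl (v : V) : isAnc G r v v := ⟨0, rfl⟩

omit hG in
lemma isAnc_root (w : V) : isAnc G r r w ∨ True := Or.inr trivial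

omit hG in
lemma isAnc_of_anc_par {a w : V} (h : isAnc G r a (par G r w)) : isAnc G r a w := by
  obtain ⟨i, hi⟩ := h
  exact ⟨i + 1, by rwa [Function.iterate_succ_apply]⟩

omit hG in
lemma isAnc_step {a w : V} : isAnc G r a w ↔ a = w ∨ isAnc G r a (par G r w) := by
  constructor
  · rintro ⟨i, hi⟩
    cases i with
    | zero => exact Or.inl hi.symm
    | succ n => exact Or.inr ⟨n, by rwa [Function.iterate_succ_apply] at hi⟩
  · rintro (rfl | ⟨i, hi⟩)
    · exact isAnc_refl a
    · exact ⟨i + 1, by rwa [Function.iterate_succ_apply]⟩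

lemma isAnc_root_eq {a : V} (h : isAnc G r a r) : a = r := by
  obtain ⟨i, hi⟩ := h
  rw [par_iter_root] at hi
  exact hi.symm

lemma depth_iter {v : V} (i : ℕ) (hi : i ≤ depth G r v) :
    depth G r ((par G r)^[i] v) = depth G r v - i := by
  induction i with
  | zero => simp
  | succ n ih =>
    have hn : n ≤ depth G r v := by omega
    have h1 := ih hn
    have hne : (par G r)^[n] v ≠ r := by
      intro h
      rw [h, depth_root] at h1
      omega
    rw [Function.iterate_succ_apply']
    have := (par_spec hG hne).2
    omega

lemma isAnc_nf {a w : V} (h : isAnc G r a w) :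
    depth G r a ≤ depth G r w ∧ (par G r)^[depth G r w - depth G r a] w = a := by
  obtain ⟨i, hi⟩ := h
  by_cases hle : i ≤ depth G r w
  · have := depth_iter hG i hle
    rw [hi] at this
    constructor
    · omega
    · have : depth G r w - depth G r a = i := by omega
      rw [this, hi]
  · have : a = r := by rw [← hi, iter_root_of_ge hG (by omega)]
    subst this
    rw [depth_root]
    exact ⟨Nat.zero_le _, by simpa using iter_depth_eq_root hG w⟩

lemma isAnc_eq_of_depth {a b w : V} (ha : isAnc G r a w) (hb : isAnc G r b w)
    (hd : depth G r a = depth G r b) : a = b := by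
  obtain ⟨h1, h2⟩ := isAnc_nf hG ha
  obtain ⟨h3, h4⟩ := isAnc_nf hG hb
  rw [← h2, ← h4, hd]

lemma depth_le_of_isAnc {a w : V} (h : isAnc G r a w) : depth G r a ≤ depth G r w :=
  (isAnc_nf hG h).1

omit hG in
lemma isAnc_of_child_anc {v x w : V} (hx : par G r x = v) (h : isAnc G r x w) :
    isAnc G r v w := by
  obtain ⟨i, hi⟩ := h
  exact ⟨i + 1, by rw [Function.iterate_succ_apply', hi, hx]⟩

lemma isAnc_ne_root {v w : V} (hv : v ≠ r) (h : isAnc G r v w) : w ≠ r := by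
  intro hw
  rw [hw] at h
  exact hv (isAnc_root_eq hG h)

lemma exists_child_anc {v w : V} (hv : v ≠ r) (h : isAnc G r v w) (hne : w ≠ v) :
    ∃ x ∈ children G r v, isAnc G r x w := by
  generalize hn : depth G r w = n
  induction n using Nat.strong_induction_on generalizing w with
  | _ n ih =>
    subst hn
    have hwr : w ≠ r := isAnc_ne_root hG hv h
    rcases isAnc_step.1 h with heq | hstep
    · exact absurd heq.symm hne
    · by_cases hpv : par G r w = v
      · exact ⟨w, by rw [← hpv]; exact mem_children_of_par hG hwr, isAnc_refl w⟩
      · have hdp : depth G r (par G r w) < depth G r w := by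
          have := (par_spec hG hwr).2; omega
        obtain ⟨x, hx1, hx2⟩ := ih _ hdp hstep (fun hh => hpv hh) rfl
        exact ⟨x, hx1, isAnc_of_anc_par hx2⟩

omit hG in
lemma self_mem_desc (v : V) : v ∈ desc G r v := mem_desc.2 (isAnc_refl v)

lemma isAnc_of_mem_children {v x : V} (hx : x ∈ children G r v) : isAnc G r v x :=
  isAnc_step.2 (Or.inr (by rw [par_of_child hG hx]; exact isAnc_refl v))

lemma desc_child_subset {v x : V} (hx : x ∈ children G r v) :
    desc G r x ⊆ desc G r v := by
  intro w hw
  rw [mem_desc] at hw ⊢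
  exact isAnc_of_child_anc (par_of_child hG hx) hw

lemma not_mem_desc_child {v x : V} (hx : x ∈ children G r v) : v ∉ desc G r x := by
  rw [mem_desc]
  intro h
  have := depth_le_of_isAnc hG h
  have := (mem_children.1 hx).2
  omega

lemma card_desc_child_lt {v x : V} (hx : x ∈ children G r v) :
    (desc G r x).card < (desc G r v).card :=
  Finset.card_lt_card (Finset.ssubset_iff_of_subset (desc_child_subset hG hx) |>.2
    ⟨v, self_mem_desc v, not_mem_desc_child hG hx⟩)

lemma desc_ne_root {v w : V} (hv : v ≠ r) (hw : w ∈ desc G r v) : w ≠ r :=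
  isAnc_ne_root hG hv (mem_desc.1 hw)

lemma desc_eq_singleton {v : V} (hv : v ≠ r) (h : children G r v = ∅) :
    desc G r v = {v} := by
  ext w
  rw [mem_desc, Finset.mem_singleton]
  constructor
  · intro hw
    by_contra hne
    obtain ⟨x, hx, -⟩ := exists_child_anc hG hv hw hne
    rw [h] at hx
    exact absurd hx (Finset.notMem_empty x)
  · rintro rfl; exact isAnc_refl w

lemma desc_eq_insert {v x : V} (hv : v ≠ r) (h : children G r v = {x}) :
    desc G r v = insert v (desc G r x) := by
  ext w
  rw [mem_desc, Finset.mem_insert, mem_desc]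
  constructor
  · intro hw
    by_cases hne : w = v
    · exact Or.inl hne
    · obtain ⟨y, hy, hy2⟩ := exists_child_anc hG hv hw hne
      rw [h, Finset.mem_singleton] at hy
      subst hy
      exact Or.inr hy2
  · rintro (rfl | hw)
    · exact isAnc_refl w
    · exact isAnc_of_child_anc (par_of_child hG (by rw [h]; exact Finset.mem_singleton_self x)) hw

variable (G r) in
/-- the subtree below `v` is a chain. -/
def chain (v : V) : Prop := ∀ w ∈ desc G r v, (children G r w).card ≤ 1

variable (G r) in
/-- rigid value of a chain subtree. -/
noncomputable def rho (v : V) : ℕ := if Odd (desc G r v).card then 1 else 2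

omit hG in
lemma rho_cases (v : V) : rho G r v = 1 ∨ rho G r v = 2 := by
  rw [rho]; split_ifs <;> simp

omit hG in
lemma rho_le_two (v : V) : rho G r v ≤ 2 := by
  rcases rho_cases (G := G) (r := r) v with h | h <;> omega

lemma leaf_chain {v : V} (hv : v ≠ r) (h : children G r v = ∅) : chain G r v := by
  intro w hw
  rw [desc_eq_singleton hG hv h, Finset.mem_singleton] at hw
  subst hw
  rw [h]
  simp

lemma leaf_rho {v : V} (hv : v ≠ r) (h : children G r v = ∅) : rho G r v = 1 := by
  rw [rho, if_pos]
  rw [desc_eq_singleton hG hv h, Finset.card_singleton]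
  simp

lemma card_desc_child {v x : V} (hv : v ≠ r) (h : children G r v = {x}) :
    (desc G r v).card = (desc G r x).card + 1 := by
  rw [desc_eq_insert hG hv h, Finset.card_insert_of_notMem]
  exact not_mem_desc_child hG (by rw [h]; exact Finset.mem_singleton_self x)

lemma rho_flip {v x : V} (hv : v ≠ r) (h : children G r v = {x}) :
    (rho G r v = 1 ↔ rho G r x = 2) := by
  have hc := card_desc_child hG hv h
  rw [rho, rho, hc]
  rcases Nat.even_or_odd (desc G r x).card with he | ho
  · rw [if_neg (Nat.not_odd_iff_even.2 he), if_pos (Nat.odd_add_one.2 (Nat.not_odd_iff_even.2 he))]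
    simp
  · rw [if_pos ho, if_neg (fun hh => (Nat.odd_add_one.1 hh) ho)]
    simp

lemma chain_child {v x : V} (h : children G r v = {x}) (hc : chain G r v) :
    chain G r x := by
  intro w hw
  exact hc w (desc_child_subset hG (by rw [h]; exact Finset.mem_singleton_self x) hw)

lemma chain_of_child {v x : V} (hv : v ≠ r) (h : children G r v = {x})
    (hc : chain G r x) : chain G r v := by
  intro w hw
  rw [desc_eq_insert hG hv h, Finset.mem_insert] at hw
  rcases hw with rfl | hw
  · rw [h, Finset.card_singleton]
  · exact hc w hw

lemma not_chain_child {v x : V} (hv : v ≠ r) (h : children G r v = {x})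
    (hc : ¬ chain G r v) : ¬ chain G r x := fun hh => hc (chain_of_child hG hv h hh)

variable (G r) in
/-- number of children of `v` whose parent edge gets color `c`. -/
noncomputable def countc (f : V → Fin 3) (c : Fin 3) (v : V) : ℕ :=
  ((children G r v).filter (fun w => f w = c)).card

variable (G r) in
/-- the `c`-degree of `v` determined by a parent-edge coloring `f`. -/
noncomputable def cd (f : V → Fin 3) (c : Fin 3) (v : V) : ℕ :=
  (if v ≠ r ∧ f v = c then 1 else 0) + countc G r f c v

variable (G r) in
/-- local irregularity at the parent edge of `w`. -/
def edgeCond (f : V → Fin 3) (w : V) : Prop :=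
  cd G r f (f w) (par G r w) ≠ cd G r f (f w) w

lemma colorDeg_formula {α : Type*} (φ : Sym2 V → α) (c : α) (v : V) :
    colorDeg G φ c v = (if v = r then 0 else if φ s(v, par G r v) = c then 1 else 0)
      + ((children G r v).filter (fun w => φ s(v, w) = c)).card := by
  have h1 : colorDeg G φ c v
      = (Finset.univ.filter (fun w => G.Adj v w ∧ φ s(v, w) = c)).card := by
    rw [colorDeg, Nat.card_eq_fintype_card, Fintype.card_subtype]
  rw [h1]
  by_cases hv : v = r
  · rw [if_pos hv, hv]
    have : Finset.univ.filter (fun w => G.Adj r w ∧ φ s(r, w) = c)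
        = (children G r r).filter (fun w => φ s(r, w) = c) := by
      ext w
      simp only [Finset.mem_filter, Finset.mem_univ, true_and]
      rw [adj_root_iff hG]
    rw [this]
    omega
  · rw [if_neg hv]
    have hsplit : Finset.univ.filter (fun w => G.Adj v w ∧ φ s(v, w) = c)
        = ((children G r v).filter (fun w => φ s(v, w) = c))
          ∪ (Finset.univ.filter (fun w => w = par G r v ∧ φ s(v, w) = c)) := by
      ext w
      simp only [Finset.mem_filter, Finset.mem_univ, true_and, Finset.mem_union]
      rw [adj_iff hG hv]
      tauto
    rw [hsplit, Finset.card_union_of_disjoint, add_comm]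
    · congr 1
      by_cases hpc : φ s(v, par G r v) = c
      · rw [if_pos hpc]
        have : Finset.univ.filter (fun w => w = par G r v ∧ φ s(v, w) = c)
            = {par G r v} := by
          ext w
          simp only [Finset.mem_filter, Finset.mem_univ, true_and, Finset.mem_singleton]
          constructor
          · exact fun h => h.1
          · rintro rfl; exact ⟨rfl, hpc⟩
        rw [this, Finset.card_singleton]
      · rw [if_neg hpc]
        have : Finset.univ.filter (fun w => w = par G r v ∧ φ s(v, w) = c) = ∅ := by
          ext w
          simp only [Finset.mem_filter, Finset.mem_univ, true_and,
            Finset.notMem_empty, iff_false, not_and]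
          rintro rfl
          exact hpc
        rw [this, Finset.card_empty]
    · rw [Finset.disjoint_right]
      intro w hw
      simp only [Finset.mem_filter, Finset.mem_univ, true_and] at hw
      rw [hw.1]
      simp only [Finset.mem_filter, not_and]
      intro hmem
      exact absurd hmem (par_not_mem_children hG hv)

variable (G r) in
/-- symmetric edge coloring induced by a parent-edge coloring. -/
noncomputable def phiOf (f : V → Fin 3) : Sym2 V → Fin 3 :=
  Sym2.lift ⟨fun x y =>
    if depth G r x < depth G r y then f y
    else if depth G r y < depth G r x then f x
    else max (f x) (f y), by
      intro x y
      dsimp only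
      split_ifs with h1 h2 <;> first
        | rfl
        | (exfalso; omega)
        | exact max_comm _ _⟩

lemma phiOf_par {f : V → Fin 3} {v : V} (hv : v ≠ r) :
    phiOf G r f s(v, par G r v) = f v := by
  have hd := (par_spec hG hv).2
  rw [phiOf, Sym2.lift_mk]
  dsimp only
  rw [if_neg (by omega), if_pos (by omega)]

lemma phiOf_child {f : V → Fin 3} {v w : V} (hw : w ∈ children G r v) :
    phiOf G r f s(v, w) = f w := by
  have hd := (mem_children.1 hw).2
  rw [phiOf, Sym2.lift_mk]
  dsimp only
  rw [if_pos (by omega)]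

lemma colorDeg_phiOf (f : V → Fin 3) (c : Fin 3) (v : V) :
    colorDeg G (phiOf G r f) c v = cd G r f c v := by
  rw [colorDeg_formula hG (r := r), cd, countc]
  congr 1
  · by_cases hv : v = r
    · rw [if_pos hv, if_neg (by simp [hv])]
    · rw [if_neg hv, phiOf_par hG hv]
      by_cases hc : f v = c
      · rw [if_pos hc, if_pos ⟨hv, hc⟩]
      · rw [if_neg hc, if_neg (fun h => hc h.2)]
  · apply congrArg Finset.card
    ext w
    simp only [Finset.mem_filter, and_congr_right_iff]
    intro hw
    rw [phiOf_child hG hw]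

lemma nc {α : Type} {φ0 : Sym2 V → α} (hIrr : IsLocIrrColoring G φ0) :
    ∀ n (v : V), (desc G r v).card ≤ n → v ≠ r → chain G r v → rho G r v = 1 →
      colorDeg G φ0 (φ0 s(par G r v, v)) (par G r v) = 1 → False := by
  intro n
  induction n with
  | zero =>
    intro v hn
    have := self_mem_desc (G := G) (r := r) v
    have : 0 < (desc G r v).card := Finset.card_pos.2 ⟨v, this⟩
    omega
  | succ n ih =>
    intro v hn hv hch hrho hcd
    set c := φ0 s(par G r v, v) with hc
    have hadj : G.Adj (par G r v) v := (par_spec hG hv).1.symm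
    have hswap : s(v, par G r v) = s(par G r v, v) := Sym2.eq_swap
    have hne1 : colorDeg G φ0 c v ≠ 1 := by
      intro h
      exact hIrr hadj (by rw [← hc, hcd, h])
    have hform := colorDeg_formula hG (r := r) φ0 c v
    rw [if_neg hv, hswap, ← hc, if_pos rfl] at hform
    have hcard1 : (children G r v).card ≤ 1 := hch v (self_mem_desc v)
    rcases Nat.lt_or_ge (children G r v).card 1 with h0 | h1
    · -- leaf : contradiction
      have he : children G r v = ∅ := Finset.card_eq_zero.1 (by omega)
      rw [he] at hform
      simp at hform
      exact hne1 hform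
    · have hcard : (children G r v).card = 1 := le_antisymm hcard1 h1
      obtain ⟨x, hx⟩ := Finset.card_eq_one.1 hcard
      rw [hx] at hform
      have hxmem : x ∈ children G r v := by rw [hx]; exact Finset.mem_singleton_self x
      have hxc : φ0 s(v, x) = c := by
        by_contra hxc
        rw [Finset.filter_singleton, if_neg hxc] at hform
        simp at hform
        exact hne1 hform
      have hcdv : colorDeg G φ0 c v = 2 := by
        rw [Finset.filter_singleton, if_pos hxc] at hform
        simpa using hform
      -- rho x = 2, chain x
      have hrx : rho G r x = 2 := (rho_flip hG hv hx).1 hrho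
      have hchx : chain G r x := chain_child hG hx hch
      have hxr : x ≠ r := child_ne_root hG hxmem
      have hadjvx : G.Adj v x := (mem_children.1 hxmem).1
      have hcdx : colorDeg G φ0 c x ≠ 2 := by
        intro h
        exact hIrr hadjvx (by rw [hxc, hcdv, h])
      have hparx : par G r x = v := par_of_child hG hxmem
      have hformx := colorDeg_formula hG (r := r) φ0 c x
      rw [if_neg hxr, hparx] at hformx
      have hswx : s(x, v) = s(v, x) := Sym2.eq_swap
      rw [hswx, hxc, if_pos rfl] at hformx
      -- children x is a singleton {y}
      have hcardx1 : (children G r x).card ≤ 1 := hchx x (self_mem_desc x)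
      have hxne : children G r x ≠ ∅ := by
        intro he
        rw [leaf_rho hG hxr he] at hrx
        omega
      have hcardx : (children G r x).card = 1 := by
        rcases Nat.lt_or_ge (children G r x).card 1 with h0 | h1
        · exact absurd (Finset.card_eq_zero.1 (by omega)) hxne
        · omega
      obtain ⟨y, hy⟩ := Finset.card_eq_one.1 hcardx
      have hymem : y ∈ children G r x := by rw [hy]; exact Finset.mem_singleton_self y
      rw [hy, Finset.filter_singleton] at hformx
      have hyc : φ0 s(x, y) ≠ c := by
        intro h
        rw [if_pos h] at hformx
        simp at hformx
        exact hcdx hformx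
      set c' := φ0 s(x, y) with hc'
      -- colorDeg c' x = 1
      have hformx' := colorDeg_formula hG (r := r) φ0 c' x
      rw [if_neg hxr, hparx, hswx, hxc] at hformx'
      rw [if_neg (show ¬ c = c' from fun h => hyc h.symm), hy, Finset.filter_singleton,
        if_pos rfl] at hformx'
      have hcdx' : colorDeg G φ0 c' x = 1 := by simpa using hformx'
      -- recurse on y
      have hyr : y ≠ r := child_ne_root hG hymem
      have hchy : chain G r y := chain_child hG hy hchx
      have hrhoy : rho G r y = 1 := by
        rcases rho_cases (G := G) (r := r) y with h | h
        · exact h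
        · exfalso
          have := (rho_flip hG hxr hy).2 h
          omega
      have hpary : par G r y = x := par_of_child hG hymem
      have hmeas : (desc G r y).card ≤ n := by
        have h1 := card_desc_child_lt hG hymem
        have h2 := card_desc_child_lt hG hxmem
        omega
      exact ih y hmeas hyr hchy hrhoy (by rw [hpary, ← hc'] ; exact hcdx')

omit hG in
lemma countc_congr {f g : V → Fin 3} {c : Fin 3} {v : V}
    (h : ∀ w ∈ children G r v, f w = g w) : countc G r f c v = countc G r g c v := by
  unfold countc
  apply congrArg Finset.card
  ext w
  simp only [Finset.mem_filter, and_congr_right_iff]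
  intro hw
  rw [h w hw]

omit hG in
lemma cd_congr {f g : V → Fin 3} {c : Fin 3} {v : V} (hv : f v = g v)
    (h : ∀ w ∈ children G r v, f w = g w) : cd G r f c v = cd G r g c v := by
  rw [cd, cd, countc_congr h, hv]

lemma isAnc_children {x w z : V} (hw : isAnc G r x w) (hz : z ∈ children G r w) :
    isAnc G r x z :=
  isAnc_of_anc_par (by rw [par_of_child hG hz]; exact hw)

lemma glue {v : V} (hv : v ≠ r) (c0 : Fin 3) (col : V → Fin 3)
    (hrec : ∀ x : V, ∃ fx : V → Fin 3, x ∈ children G r v → (fx x = col x ∧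
        1 + countc G r fx (col x) x ≠ (if c0 = col x then 1 else 0)
            + ((children G r v).filter (fun z => col z = col x)).card ∧
        ∀ w ∈ desc G r x, w ≠ x → edgeCond G r fx w)) :
    ∃ f : V → Fin 3, f v = c0 ∧ (∀ x ∈ children G r v, f x = col x) ∧
      (∀ c, countc G r f c v = ((children G r v).filter (fun z => col z = c)).card) ∧
      ∀ w ∈ desc G r v, w ≠ v → edgeCond G r f w := by
  choose F hF using hrec
  have huniq : ∀ (w x₁ x₂ : V), x₁ ∈ children G r v → x₂ ∈ children G r v →
      isAnc G r x₁ w → isAnc G r x₂ w → x₁ = x₂ := by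
    intro w x₁ x₂ h1 h2 ha1 ha2
    apply isAnc_eq_of_depth hG ha1 ha2
    rw [(mem_children.1 h1).2, (mem_children.1 h2).2]
  set f : V → Fin 3 := fun w =>
    if h : ∃ x, x ∈ children G r v ∧ isAnc G r x w then F h.choose w else c0 with hfdef
  have f_eq : ∀ x ∈ children G r v, ∀ w, isAnc G r x w → f w = F x w := by
    intro x hx w hw
    have hex : ∃ x', x' ∈ children G r v ∧ isAnc G r x' w := ⟨x, hx, hw⟩
    rw [hfdef]
    dsimp only
    rw [dif_pos hex]
    have hspec := hex.choose_spec
    rw [huniq w _ x hspec.1 hx hspec.2 hw]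
  have f_v : f v = c0 := by
    rw [hfdef]
    dsimp only
    rw [dif_neg]
    rintro ⟨x, hx, hanc⟩
    have h1 := depth_le_of_isAnc hG hanc
    have h2 := (mem_children.1 hx).2
    omega
  have f_child : ∀ x ∈ children G r v, f x = col x := by
    intro x hx
    rw [f_eq x hx x (isAnc_refl x)]
    exact (hF x hx).1
  have hcount : ∀ c, countc G r f c v
      = ((children G r v).filter (fun z => col z = c)).card := by
    intro c
    unfold countc
    apply congrArg Finset.card
    ext w
    simp only [Finset.mem_filter, and_congr_right_iff]
    intro hw
    rw [f_child w hw]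
  refine ⟨f, f_v, f_child, hcount, ?_⟩
  intro w hw hne
  obtain ⟨x, hx, hanc⟩ := exists_child_anc hG hv (mem_desc.1 hw) hne
  by_cases hwx : w = x
  · subst hwx
    rw [edgeCond, par_of_child hG hx, f_child w hx]
    have hL : cd G r f (col w) v = (if c0 = col w then 1 else 0)
        + ((children G r v).filter (fun z => col z = col w)).card := by
      rw [cd, hcount, f_v]
      by_cases hc : c0 = col w
      · rw [if_pos ⟨hv, hc⟩, if_pos hc]
      · rw [if_neg (fun hh => hc hh.2), if_neg hc]
    have hR : cd G r f (col w) w = 1 + countc G r (F w) (col w) w := by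
      rw [cd, if_pos ⟨child_ne_root hG hx, f_child w hx⟩]
      congr 1
      apply countc_congr
      intro z hz
      exact f_eq w hx z (isAnc_children hG (isAnc_refl w) hz)
    rw [hL, hR]
    exact fun h => (hF w hx).2.1 h.symm
  · have hancp : isAnc G r x (par G r w) := by
      rcases isAnc_step.1 hanc with h | h
      · exact absurd h.symm hwx
      · exact h
    have hcd1 : cd G r f (f w) (par G r w) = cd G r (F x) (F x w) (par G r w) := by
      rw [f_eq x hx w hanc]
      apply cd_congr (f_eq x hx _ hancp)
      intro z hz
      exact f_eq x hx z (isAnc_children hG hancp hz)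
    have hcd2 : cd G r f (f w) w = cd G r (F x) (F x w) w := by
      rw [f_eq x hx w hanc]
      apply cd_congr (f_eq x hx w hanc)
      intro z hz
      exact f_eq x hx z (isAnc_children hG hanc hz)
    rw [edgeCond, hcd1, hcd2]
    exact (hF x hx).2.2 w (mem_desc.2 hanc) hwx

omit hG in
lemma card_filter_pair {a b : V} (hab : a ≠ b) (p : V → Prop) [DecidablePred p] :
    (({a, b} : Finset V).filter p).card
      = (if p a then 1 else 0) + (if p b then 1 else 0) := by
  rw [Finset.filter_insert, Finset.filter_singleton]
  by_cases pa : p a <;> by_cases pb : p b <;>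
    simp [pa, pb, Finset.card_insert_of_notMem, hab]

lemma EX : ∀ (n : ℕ) (v : V), (desc G r v).card ≤ n → v ≠ r → ∀ (c0 : Fin 3) (m : ℕ),
    ¬(chain G r v ∧ rho G r v = m) →
    ∃ f : V → Fin 3, f v = c0 ∧ 1 + countc G r f c0 v ≠ m ∧
      ∀ w ∈ desc G r v, w ≠ v → edgeCond G r f w := by
  have t1 : ∀ c : Fin 3, ¬(c = c + 1) := by decide
  have t2 : ∀ c : Fin 3, ¬(c = c + 2) := by decide
  have t3 : ∀ c : Fin 3, ¬(c + 2 = c + 1) := by decide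
  have t4 : ∀ c : Fin 3, ¬(c + 1 = c) := by decide
  have t5 : ∀ c : Fin 3, ¬(c + 2 = c) := by decide
  have t6 : ∀ c : Fin 3, ¬(c + 1 = c + 2) := by decide
  intro n
  induction n with
  | zero =>
    intro v hn
    have : 0 < (desc G r v).card := Finset.card_pos.2 ⟨v, self_mem_desc v⟩
    omega
  | succ n ih =>
    intro v hn hv c0 m hm
    have main : ∀ col : V → Fin 3,
        (∀ x ∈ children G r v, ¬(chain G r x ∧ rho G r x =
          (if c0 = col x then 1 else 0)
            + ((children G r v).filter (fun z => col z = col x)).card)) →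
        ∃ f : V → Fin 3, f v = c0 ∧
          (∀ c, countc G r f c v = ((children G r v).filter (fun z => col z = c)).card) ∧
          ∀ w ∈ desc G r v, w ≠ v → edgeCond G r f w := by
      intro col hcol
      have hrec : ∀ x : V, ∃ fx : V → Fin 3, x ∈ children G r v → (fx x = col x ∧
          1 + countc G r fx (col x) x ≠ (if c0 = col x then 1 else 0)
              + ((children G r v).filter (fun z => col z = col x)).card ∧
          ∀ w ∈ desc G r x, w ≠ x → edgeCond G r fx w) := by
        intro x
        by_cases hx : x ∈ children G r v
        · have hmeas : (desc G r x).card ≤ n := by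
            have := card_desc_child_lt hG hx
            omega
          obtain ⟨fx, e1, e2, e3⟩ :=
            ih x hmeas (child_ne_root hG hx) (col x) _ (hcol x hx)
          exact ⟨fx, fun _ => ⟨e1, e2, e3⟩⟩
        · exact ⟨fun _ => c0, fun h => absurd h hx⟩
      obtain ⟨f, h1, h2, h3, h4⟩ := glue hG hv c0 col hrec
      exact ⟨f, h1, h3, h4⟩
    rcases Nat.lt_or_ge (children G r v).card 1 with hk0 | hk1
    · -- leaf
      have hch : children G r v = ∅ := Finset.card_eq_zero.1 (by omega)
      obtain ⟨f, hfv, hcnt, hedge⟩ := main (fun _ => c0) (by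
        intro x hx
        rw [hch] at hx
        exact absurd hx (Finset.notMem_empty x))
      refine ⟨f, hfv, ?_, hedge⟩
      rw [hcnt c0, hch]
      simp only [Finset.filter_empty, Finset.card_empty]
      intro hval
      exact hm ⟨leaf_chain hG hv hch, by rw [leaf_rho hG hv hch]; omega⟩
    rcases Nat.lt_or_ge (children G r v).card 2 with hk1' | hk2
    · -- exactly one child x
      have hcard : (children G r v).card = 1 := by omega
      obtain ⟨x, hxs⟩ := Finset.card_eq_one.1 hcard
      have hxmem : x ∈ children G r v := by rw [hxs]; exact Finset.mem_singleton_self x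
      have hxr : x ≠ r := child_ne_root hG hxmem
      -- value computations for the two candidate colourings
      have hA : ((children G r v).filter (fun z => (c0 : Fin 3) = c0)).card = 1 := by
        rw [hxs, Finset.filter_singleton, if_pos rfl, Finset.card_singleton]
      have hB0 : ((children G r v).filter (fun z => (c0 + 1 : Fin 3) = c0)).card = 0 := by
        rw [hxs, Finset.filter_singleton, if_neg (t4 c0), Finset.card_empty]
      have hB1 : ((children G r v).filter (fun z => (c0 + 1 : Fin 3) = c0 + 1)).card = 1 := by
        rw [hxs, Finset.filter_singleton, if_pos rfl, Finset.card_singleton]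
      have useA : ¬(chain G r x ∧ rho G r x = 2) →
          ∃ f : V → Fin 3, f v = c0 ∧ 1 + countc G r f c0 v = 2 ∧
            ∀ w ∈ desc G r v, w ≠ v → edgeCond G r f w := by
        intro hob
        obtain ⟨f, hfv, hcnt, hedge⟩ := main (fun _ => c0) (by
          intro y hy
          rw [hxs, Finset.mem_singleton] at hy
          subst hy
          rw [if_pos rfl, hA]
          exact hob)
        exact ⟨f, hfv, by rw [hcnt c0, hA], hedge⟩
      have useB : ¬(chain G r x ∧ rho G r x = 1) →
          ∃ f : V → Fin 3, f v = c0 ∧ 1 + countc G r f c0 v = 1 ∧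
            ∀ w ∈ desc G r v, w ≠ v → edgeCond G r f w := by
        intro hob
        obtain ⟨f, hfv, hcnt, hedge⟩ := main (fun _ => c0 + 1) (by
          intro y hy
          rw [hxs, Finset.mem_singleton] at hy
          subst hy
          rw [if_neg (t1 c0), hB1]
          exact hob)
        exact ⟨f, hfv, by rw [hcnt c0, hB0], hedge⟩
      by_cases hchx : chain G r x
      · rcases rho_cases (G := G) (r := r) x with hx1 | hx2
        · obtain ⟨f, hfv, hval, hedge⟩ := useA (fun hh => by omega)
          refine ⟨f, hfv, ?_, hedge⟩
          rw [hval]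
          intro hm2
          have hchv : chain G r v := chain_of_child hG hv hxs hchx
          have hrv : rho G r v = 2 := by
            rcases rho_cases (G := G) (r := r) v with h | h
            · exact absurd ((rho_flip hG hv hxs).1 h) (by omega)
            · exact h
          exact hm ⟨hchv, by omega⟩
        · obtain ⟨f, hfv, hval, hedge⟩ := useB (fun hh => by omega)
          refine ⟨f, hfv, ?_, hedge⟩
          rw [hval]
          intro hm1
          have hchv : chain G r v := chain_of_child hG hv hxs hchx
          have hrv : rho G r v = 1 := (rho_flip hG hv hxs).2 hx2
          exact hm ⟨hchv, by omega⟩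
      · by_cases hm2 : m = 2
        · obtain ⟨f, hfv, hval, hedge⟩ := useB (fun hh => hchx hh.1)
          exact ⟨f, hfv, by omega, hedge⟩
        · obtain ⟨f, hfv, hval, hedge⟩ := useA (fun hh => hchx hh.1)
          exact ⟨f, hfv, by omega, hedge⟩
    · -- at least two children
      by_cases hmk : m = 1 + (children G r v).card
      · by_cases hall : ∀ x ∈ children G r v,
            ¬(chain G r x ∧ rho G r x = (children G r v).card)
        · -- all children distinct colour c0+1
          have hT : ((children G r v).filter
              (fun z => (c0 + 1 : Fin 3) = c0 + 1)).card = (children G r v).card := by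
            rw [Finset.filter_true_of_mem (fun z _ => rfl)]
          have hF0 : ((children G r v).filter
              (fun z => (c0 + 1 : Fin 3) = c0)).card = 0 := by
            rw [Finset.filter_false_of_mem (fun z _ => t4 c0), Finset.card_empty]
          obtain ⟨f, hfv, hcnt, hedge⟩ := main (fun _ => c0 + 1) (by
            intro x hx
            rw [if_neg (t1 c0), hT]
            simpa using hall x hx)
          refine ⟨f, hfv, ?_, hedge⟩
          rw [hcnt c0, hF0]
          omega
        · push_neg at hall
          obtain ⟨x0, hx0mem, hchx0, hrx0⟩ := hall
          have hkk : (children G r v).card = 2 := by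
            have := rho_le_two (G := G) (r := r) x0
            omega
          have hrx02 : rho G r x0 = 2 := by omega
          obtain ⟨a, b, hab, hpairab⟩ := Finset.card_eq_two.1 hkk
          obtain ⟨y, hxy, hpair⟩ : ∃ y, x0 ≠ y ∧ children G r v = {x0, y} := by
            have hx0ab : x0 = a ∨ x0 = b := by
              have := hx0mem
              rw [hpairab, Finset.mem_insert, Finset.mem_singleton] at this
              exact this
            rcases hx0ab with rfl | rfl
            · exact ⟨b, hab, hpairab⟩
            · exact ⟨a, hab.symm, by rw [hpairab, Finset.pair_comm]⟩
          have hymem : y ∈ children G r v := by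
            rw [hpair]
            exact Finset.mem_insert_of_mem (Finset.mem_singleton_self y)
          by_cases hy2 : chain G r y ∧ rho G r y = 2
          · -- colours c0+1 on x0, c0+2 on y
            set col : V → Fin 3 := fun w => if w = x0 then c0 + 1 else c0 + 2 with hcol
            have hcx0 : col x0 = c0 + 1 := by rw [hcol]; simp
            have hcy : col y = c0 + 2 := by rw [hcol]; simp [Ne.symm hxy]
            have e1 : ((children G r v).filter (fun z => col z = c0 + 1)).card = 1 := by
              rw [hpair, card_filter_pair hxy, hcx0, hcy]
              simp [t3 c0]
            have e2 : ((children G r v).filter (fun z => col z = c0 + 2)).card = 1 := by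
              rw [hpair, card_filter_pair hxy, hcx0, hcy]
              simp [t6 c0]
            have e0 : ((children G r v).filter (fun z => col z = c0)).card = 0 := by
              rw [hpair, card_filter_pair hxy, hcx0, hcy]
              simp [t4 c0, t5 c0]
            obtain ⟨f, hfv, hcnt, hedge⟩ := main col (by
              intro x hx
              rw [hpair, Finset.mem_insert, Finset.mem_singleton] at hx
              rcases hx with rfl | rfl
              · rw [hcx0, if_neg (t1 c0), e1]
                simp only [zero_add]
                intro hh
                omega
              · rw [hcy, if_neg (t2 c0), e2]
                simp only [zero_add]
                intro hh
                have h1 := hh.2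
                have h2 := hy2.2
                omega)
            refine ⟨f, hfv, ?_, hedge⟩
            rw [hcnt c0, e0]
            omega
          · -- colour c0+1 on x0, c0 on y
            set col : V → Fin 3 := fun w => if w = x0 then c0 + 1 else c0 with hcol
            have hcx0 : col x0 = c0 + 1 := by rw [hcol]; simp
            have hcy : col y = c0 := by rw [hcol]; simp [Ne.symm hxy]
            have e1 : ((children G r v).filter (fun z => col z = c0 + 1)).card = 1 := by
              rw [hpair, card_filter_pair hxy, hcx0, hcy]
              simp [t1 c0]
            have e0 : ((children G r v).filter (fun z => col z = c0)).card = 1 := by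
              rw [hpair, card_filter_pair hxy, hcx0, hcy]
              simp [t4 c0]
            obtain ⟨f, hfv, hcnt, hedge⟩ := main col (by
              intro x hx
              rw [hpair, Finset.mem_insert, Finset.mem_singleton] at hx
              rcases hx with rfl | rfl
              · rw [hcx0, if_neg (t1 c0), e1]
                simp only [zero_add]
                intro hh
                omega
              · rw [hcy, if_pos rfl, e0]
                intro hh
                exact hy2 ⟨hh.1, by omega⟩)
            refine ⟨f, hfv, ?_, hedge⟩
            rw [hcnt c0, e0]
            omega
      · -- colour everything c0
        have hT : ((children G r v).filter (fun z => (c0 : Fin 3) = c0)).card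
            = (children G r v).card := by
          rw [Finset.filter_true_of_mem (fun z _ => rfl)]
        obtain ⟨f, hfv, hcnt, hedge⟩ := main (fun _ => c0) (by
          intro x hx
          rw [if_pos rfl, hT]
          intro hh
          have := rho_le_two (G := G) (r := r) x
          omega)
        refine ⟨f, hfv, ?_, hedge⟩
        rw [hcnt c0, hT]
        omega

end Rooted

lemma exists_leaf {G : SimpleGraph V} (hG : G.IsTree) {v0 w0 : V} (h : G.Adj v0 w0) :
    ∃ r u : V, ∀ w, G.Adj r w ↔ w = u := by
  obtain ⟨r, -, hmax⟩ := Finset.exists_max_image Finset.univ (depth G v0)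
    ⟨v0, Finset.mem_univ v0⟩
  have h1 : depth G v0 w0 = 1 := by
    rw [depth, SimpleGraph.dist_eq_one_iff_adj]
    exact h
  have hrv0 : r ≠ v0 := by
    intro hh
    have := hmax w0 (Finset.mem_univ w0)
    rw [hh, depth_root] at this
    omega
  refine ⟨r, par G v0 r, ?_⟩
  intro w
  constructor
  · intro hadj
    rcases adj_depth hG (r := v0) hadj with hd | hd
    · exfalso
      have := hmax w (Finset.mem_univ w)
      omega
    · exact par_unique hG hadj (by omega)
  · rintro rfl
    exact (par_spec hG (r := v0) hrv0).1

end LocIrrAux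

open LocIrrAux in
/-- Every tree that admits a locally irregular edge coloring admits one with at
most 3 colors, i.e. its locally irregular chromatic index is at most 3. -/
theorem tree_chromatic_index_le_three {V : Type*} [Fintype V]
    (G : SimpleGraph V) (hT : G.IsTree)
    (hcol : ∃ (α : Type) (φ : Sym2 V → α), IsLocIrrColoring G φ) :
    ∃ φ : Sym2 V → Fin 3, IsLocIrrColoring G φ := by
  classical
  by_cases hE : ∀ v w : V, ¬ G.Adj v w
  · exact ⟨fun _ => 0, fun v w h => absurd h (hE v w)⟩
  · push_neg at hE
    obtain ⟨v0, w0, hadj0⟩ := hE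
    obtain ⟨r, u, hru⟩ := exists_leaf hT hadj0
    have hadjru : G.Adj r u := (hru u).2 rfl
    have hur : u ≠ r := fun h => G.irrefl (h ▸ hadjru)
    have hchr : children G r r = {u} := by
      ext w
      rw [← adj_root_iff hT, hru w, Finset.mem_singleton]
    have humem : u ∈ children G r r := by rw [hchr]; exact Finset.mem_singleton_self u
    have hpu : par G r u = r := par_of_child hT humem
    have hcover : ∀ (k : ℕ) (w : V), depth G r w ≤ k → w ≠ r → isAnc G r u w := by
      intro k
      induction k with
      | zero =>
        intro w hk hw
        exact absurd ((depth_eq_zero hT).1 (by omega)) hw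
      | succ k ihk =>
        intro w hk hw
        by_cases hpw : par G r w = r
        · have : w ∈ children G r (par G r w) := mem_children_of_par hT hw
          rw [hpw, hchr, Finset.mem_singleton] at this
          rw [this]
          exact isAnc_refl u
        · have hd := (par_spec hT hw).2
          exact isAnc_of_anc_par (ihk (par G r w) (by omega) hpw)
    by_cases hbad : chain G r u ∧ rho G r u = 1
    · exfalso
      obtain ⟨α, φ0, hIrr⟩ := hcol
      apply nc hT (r := r) hIrr (Fintype.card V) u
        (le_trans (Finset.card_le_univ _) (le_of_eq (Finset.card_univ)))
        hur hbad.1 hbad.2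
      -- colorDeg at the root is 1
      rw [hpu]
      rw [colorDeg_formula hT (r := r)]
      rw [if_pos rfl, hchr, Finset.filter_singleton, if_pos rfl, Finset.card_singleton]
    · obtain ⟨f, hfu, hval, hedge⟩ := EX hT (r := r) (Fintype.card V) u
        (le_trans (Finset.card_le_univ _) (le_of_eq (Finset.card_univ)))
        hur 0 1 hbad
      refine ⟨phiOf G r f, ?_⟩
      have key : ∀ a b : V, G.Adj a b → depth G r b = depth G r a + 1 →
          colorDeg G (phiOf G r f) (phiOf G r f s(a, b)) a
            ≠ colorDeg G (phiOf G r f) (phiOf G r f s(a, b)) b := by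
        intro a b hab hd
        have hbmem : b ∈ children G r a := mem_children.2 ⟨hab, hd⟩
        have hbr : b ≠ r := child_ne_root hT hbmem
        have hpb : par G r b = a := par_of_child hT hbmem
        rw [phiOf_child hT hbmem, colorDeg_phiOf hT, colorDeg_phiOf hT]
        by_cases hbu : b = u
        · have har : a = r := by rw [← hpb, hbu, hpu]
          rw [hbu, har]
          have hL : cd G r f (f u) r = 1 := by
            rw [cd, if_neg (by simp), countc, hchr, Finset.filter_singleton,
              if_pos rfl, Finset.card_singleton]
          have hR : cd G r f (f u) u = 1 + countc G r f (f u) u := by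
            rw [cd, if_pos ⟨hur, rfl⟩]
          rw [hL, hR, hfu]
          exact fun hh => hval hh.symm
        · have hmem : b ∈ desc G r u :=
            mem_desc.2 (hcover (depth G r b) b le_rfl hbr)
          have := hedge b hmem hbu
          rw [edgeCond, hpb] at this
          exact this
      intro a b hab
      rcases adj_depth hT (r := r) hab with hd | hd
      · exact key a b hab hd
      · have := key b a hab.symm hd
        rw [Sym2.eq_swap] at this
        exact this.symm
end

section
/- Every tree T with maximum degree at least 5 admits a locally irregular edge coloring with 2 colors. -/
open Finset

section ColorDeg
variable {V α : Type*} [Fintype V] [DecidableEq V] (G : SimpleGraph V) [DecidableRel G.Adj]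

lemma colorDeg_eq_card [DecidableEq α] (φ : Sym2 V → α) (c : α) (v : V) :
    colorDeg G φ c v = ((G.neighborFinset v).filter (fun w => φ s(v, w) = c)).card := by
  rw [colorDeg, Nat.card_eq_fintype_card, Fintype.card_subtype]
  congr 1
  ext w
  simp [SimpleGraph.mem_neighborFinset]

lemma colorDeg_congr [DecidableEq α] (φ ψ : Sym2 V → α) (c : α) (v : V)
    (h : ∀ w, G.Adj v w → φ s(v, w) = ψ s(v, w)) :
    colorDeg G φ c v = colorDeg G ψ c v := by
  rw [colorDeg_eq_card, colorDeg_eq_card]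
  congr 1
  apply Finset.filter_congr
  intro w hw
  rw [h w (by rwa [SimpleGraph.mem_neighborFinset] at hw)]

lemma colorDeg_comp_swap (φ : Sym2 V → Fin 2) (c : Fin 2) (v : V) :
    colorDeg G (fun e => (φ e) + 1) (c + 1) v = colorDeg G φ c v := by
  rw [colorDeg_eq_card, colorDeg_eq_card]
  congr 1
  apply Finset.filter_congr
  intro w _
  constructor
  · intro h
    have h2 : φ s(v,w) + 1 + 1 = c + 1 + 1 := by rw [h]
    have : ∀ x : Fin 2, x + 1 + 1 = x := by decide
    rwa [this, this] at h2
  · intro h; rw [h]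

end ColorDeg

/-- Core combinatorial lemma. -/
lemma core_lemma {ι : Type*} [DecidableEq ι] (A : ι → Set ℕ) (s : Finset ι)
    (hA : ∀ i ∈ s, ∃ d, 1 ≤ d ∧ d ≤ 4 ∧ d ∈ A i) :
    ∃ T ⊆ s, T.card ≤ 3 ∧ (∀ i ∈ T, ∃ d ∈ A i, d ≠ T.card + 1) ∧
      (∀ i ∈ s \ T, ∃ d ∈ A i, d ≠ s.card - T.card) := by
  classical
  set k := s.card with hk
  set Bad : ℕ → Finset ι := fun t => s.filter (fun i => A i = {t}) with hBad
  have avoid : ∀ t, ∀ i ∈ s, i ∉ Bad t → ∃ d ∈ A i, d ≠ t := by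
    intro t i hi hbad
    obtain ⟨d, _, _, hd⟩ := hA i hi
    by_cases hdt : d = t
    · subst hdt
      simp only [hBad, mem_filter, hi, true_and] at hbad
      by_contra hcon
      push_neg at hcon
      apply hbad
      ext x
      simp only [Set.mem_singleton_iff]
      exact ⟨fun hx => hcon x hx, fun hx => hx ▸ hd⟩
    · exact ⟨d, hd, hdt⟩
  have badzero : ∀ t, (t < 1 ∨ 4 < t) → Bad t = ∅ := by
    intro t ht
    rw [Finset.eq_empty_iff_forall_notMem]
    intro i hi
    simp only [hBad, mem_filter] at hi
    obtain ⟨d, h1, h4, hd⟩ := hA i hi.1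
    rw [hi.2, Set.mem_singleton_iff] at hd
    omega
  have badsub : ∀ t, Bad t ⊆ s := fun t => Finset.filter_subset _ _
  have baddisj : ∀ t t', t ≠ t' → Disjoint (Bad t) (Bad t') := by
    intro t t' htt
    rw [Finset.disjoint_left]
    intro i hi hi'
    simp only [hBad, mem_filter] at hi hi'
    apply htt
    have : t ∈ ({t'} : Set ℕ) := by rw [← hi'.2, hi.2]; rfl
    simpa using this
  have feas : ∀ n t1 t2, t1 = n + 1 → t2 = s.card - n → n ≤ s.card → n ≤ 3 →
      (Bad t1).card ≤ s.card - n → (Bad t2).card ≤ n →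
      (t1 = t2 → (Bad t1).card = 0) →
      ∃ T ⊆ s, T.card ≤ 3 ∧ (∀ i ∈ T, ∃ d ∈ A i, d ≠ T.card + 1) ∧
        (∀ i ∈ s \ T, ∃ d ∈ A i, d ≠ s.card - T.card) := by
    rintro n t1 t2 rfl rfl hnk hn3 h1 h2 h3
    have hdisj : Disjoint (Bad (s.card - n)) (Bad (n+1)) := by
      by_cases heq : n + 1 = s.card - n
      · rw [Finset.card_eq_zero.1 (h3 heq)]; simp
      · exact baddisj _ _ (fun h => heq h.symm)
    have hsub : Bad (s.card - n) ⊆ s \ Bad (n+1) := by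
      intro i hi
      rw [Finset.mem_sdiff]
      exact ⟨badsub _ hi, fun h => (Finset.disjoint_left.1 hdisj hi) h⟩
    have hcard : n ≤ (s \ Bad (n+1)).card := by
      rw [Finset.card_sdiff_of_subset (badsub _)]
      omega
    obtain ⟨T, hT1, hT2, hT3⟩ := Finset.exists_subsuperset_card_eq hsub h2 hcard
    refine ⟨T, fun i hi => (Finset.mem_sdiff.1 (hT2 hi)).1, by omega, ?_, ?_⟩
    · intro i hi
      have hmem := Finset.mem_sdiff.1 (hT2 hi)
      rw [hT3]
      exact avoid (n+1) i hmem.1 hmem.2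
    · intro i hi
      rw [Finset.mem_sdiff] at hi
      rw [hT3]
      exact avoid (s.card - n) i hi.1 (fun h => hi.2 (hT1 h))
  have csum : (Bad 1).card + (Bad 2).card + (Bad 3).card + (Bad 4).card ≤ s.card := by
    have e1 : (Bad 1 ∪ Bad 2).card = (Bad 1).card + (Bad 2).card :=
      Finset.card_union_of_disjoint (baddisj 1 2 (by omega))
    have e2 : (Bad 1 ∪ Bad 2 ∪ Bad 3).card = (Bad 1).card + (Bad 2).card + (Bad 3).card := by
      rw [Finset.card_union_of_disjoint, e1]
      rw [Finset.disjoint_union_left]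
      exact ⟨baddisj 1 3 (by omega), baddisj 2 3 (by omega)⟩
    have e3 : (Bad 1 ∪ Bad 2 ∪ Bad 3 ∪ Bad 4).card
        = (Bad 1).card + (Bad 2).card + (Bad 3).card + (Bad 4).card := by
      rw [Finset.card_union_of_disjoint, e2]
      rw [Finset.disjoint_union_left, Finset.disjoint_union_left]
      exact ⟨⟨baddisj 1 4 (by omega), baddisj 2 4 (by omega)⟩, baddisj 3 4 (by omega)⟩
    rw [← e3]
    apply Finset.card_le_card
    intro i hi
    simp only [Finset.mem_union] at hi
    rcases hi with ((h|h)|h)|h <;> exact badsub _ h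
  have c0 : (Bad 0).card = 0 := by rw [badzero 0 (by omega)]; simp
  have cle : ∀ t, (Bad t).card ≤ s.card := fun t => Finset.card_le_card (badsub t)
  rcases le_or_gt 5 s.card with hk5 | hk5
  · have ck : (Bad s.card).card = 0 := by rw [badzero s.card (by omega)]; simp
    have c1 := cle 1
    exact feas 0 1 s.card rfl (by omega) (by omega) (by omega) (by omega) (by omega)
      (fun h => by omega)
  · have hc1 := cle 1
    have hc2 := cle 2
    have hc3 := cle 3
    have hc4 := cle 4
    have hcases : s.card = 0 ∨ s.card = 1 ∨ s.card = 2 ∨ s.card = 3 ∨ s.card = 4 := by omega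
    rcases hcases with hc | hc | hc | hc | hc
    · exact feas 0 1 0 rfl (by omega) (by omega) (by omega) (by omega) (by omega)
        (fun h => by omega)
    · by_cases h1 : (Bad 1).card = 0
      · exact feas 0 1 1 rfl (by omega) (by omega) (by omega) (by omega) (by omega)
          (fun _ => by omega)
      · exact feas 1 2 0 rfl (by omega) (by omega) (by omega) (by omega) (by omega)
          (fun h => by omega)
    · by_cases h2 : (Bad 2).card = 0
      · exact feas 0 1 2 rfl (by omega) (by omega) (by omega) (by omega) (by omega)
          (fun h => by omega)
      · by_cases h21 : (Bad 2).card ≤ 1 ∧ (Bad 1).card ≤ 1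
        · exact feas 1 2 1 rfl (by omega) (by omega) (by omega) (by omega) (by omega)
            (fun h => by omega)
        · exact feas 2 3 0 rfl (by omega) (by omega) (by omega) (by omega) (by omega)
            (fun h => by omega)
    · by_cases h3 : (Bad 3).card = 0
      · exact feas 0 1 3 rfl (by omega) (by omega) (by omega) (by omega) (by omega)
          (fun h => by omega)
      · by_cases h2 : (Bad 2).card = 0
        · exact feas 1 2 2 rfl (by omega) (by omega) (by omega) (by omega) (by omega)
            (fun _ => by omega)
        · by_cases h31 : (Bad 3).card ≤ 1 ∧ (Bad 1).card ≤ 2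
          · exact feas 2 3 1 rfl (by omega) (by omega) (by omega) (by omega) (by omega)
              (fun h => by omega)
          · exact feas 3 4 0 rfl (by omega) (by omega) (by omega) (by omega) (by omega)
              (fun h => by omega)
    · by_cases h4 : (Bad 4).card = 0
      · exact feas 0 1 4 rfl (by omega) (by omega) (by omega) (by omega) (by omega)
          (fun h => by omega)
      · by_cases hA1 : (Bad 2).card ≤ 3 ∧ (Bad 3).card ≤ 1
        · exact feas 1 2 3 rfl (by omega) (by omega) (by omega) (by omega) (by omega)
            (fun h => by omega)
        · by_cases hA2 : (Bad 3).card ≤ 2 ∧ (Bad 2).card ≤ 2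
          · exact feas 2 3 2 rfl (by omega) (by omega) (by omega) (by omega) (by omega)
              (fun h => by omega)
          · exact feas 3 4 1 rfl (by omega) (by omega) (by omega) (by omega) (by omega)
              (fun h => by omega)

open Finset Function

/-- A rooted-tree structure on a graph. -/
structure RootedStr {V : Type*} (G : SimpleGraph V) where
  r : V
  p : V → V
  dep : V → ℕ
  hpr : p r = r
  hadj : ∀ v, v ≠ r → G.Adj v (p v)
  hdep : ∀ v, v ≠ r → dep (p v) + 1 = dep v
  hedge : ∀ ⦃u w⦄, G.Adj u w → p u = w ∨ p w = u

namespace RootedStr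

variable {V : Type*} [Fintype V] [DecidableEq V] {G : SimpleGraph V} [DecidableRel G.Adj]
variable (R : RootedStr G)

/-- descendants (reflexive) -/
def desc (v x : V) : Prop := ∃ n, R.p^[n] x = v

def children (x : V) : Finset V := univ.filter (fun u => R.p u = x ∧ u ≠ R.r)

lemma mem_children {u x : V} : u ∈ R.children x ↔ R.p u = x ∧ u ≠ R.r := by
  simp [children]

lemma p_ne_self {v : V} (hv : v ≠ R.r) : R.p v ≠ v :=
  (R.hadj v hv).ne'

lemma dep_p_le (v : V) : R.dep (R.p v) ≤ R.dep v := by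
  by_cases hv : v = R.r
  · subst hv; rw [R.hpr]
  · have := R.hdep v hv; omega

lemma dep_p_lt {v : V} (hv : v ≠ R.r) : R.dep (R.p v) < R.dep v := by
  have := R.hdep v hv; omega

lemma dep_iter_le (n : ℕ) (x : V) : R.dep (R.p^[n] x) ≤ R.dep x := by
  induction n with
  | zero => simp
  | succ n ih =>
    rw [Function.iterate_succ_apply']
    exact le_trans (R.dep_p_le _) ih

lemma desc_refl (v : V) : R.desc v v := ⟨0, rfl⟩

lemma desc_of_p {x c : V} (h : R.p x = c) : R.desc c x := ⟨1, by simpa using h⟩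

lemma desc_trans {v u x : V} (h1 : R.desc u x) (h2 : R.desc v u) : R.desc v x := by
  obtain ⟨n, hn⟩ := h1
  obtain ⟨m, hm⟩ := h2
  exact ⟨m + n, by rw [Function.iterate_add_apply, hn, hm]⟩

lemma desc_dep_le {v x : V} (h : R.desc v x) : R.dep v ≤ R.dep x := by
  obtain ⟨n, hn⟩ := h
  rw [← hn]
  exact R.dep_iter_le n x

lemma desc_p {v x : V} (h : R.desc v x) (hx : x ≠ v) : R.desc v (R.p x) := by
  obtain ⟨n, hn⟩ := h
  match n, hn with
  | 0, hn => exact absurd hn hx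
  | (m+1), hn => exact ⟨m, by rwa [Function.iterate_succ_apply] at hn⟩

lemma desc_of_p_desc {v x : V} (h : R.desc v (R.p x)) : R.desc v x := by
  obtain ⟨n, hn⟩ := h
  exact ⟨n + 1, by rwa [Function.iterate_succ_apply]⟩

lemma desc_dep_lt {v x : V} (h : R.desc v x) (hx : x ≠ v) (hxr : x ≠ R.r) :
    R.dep v < R.dep x := by
  have h1 : R.desc v (R.p x) := R.desc_p h hx
  have := R.desc_dep_le h1
  have := R.dep_p_lt hxr
  omega

lemma iter_r (n : ℕ) : R.p^[n] R.r = R.r := by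
  induction n with
  | zero => rfl
  | succ n ih => rw [Function.iterate_succ_apply, R.hpr, ih]

lemma r_not_desc {v : V} (hv : v ≠ R.r) : ¬ R.desc v R.r := by
  rintro ⟨n, hn⟩
  rw [R.iter_r] at hn
  exact hv hn.symm

lemma desc_ne_r {v x : V} (hv : v ≠ R.r) (h : R.desc v x) : x ≠ R.r := by
  rintro rfl
  exact R.r_not_desc hv h

lemma parent_not_desc {v : V} (hv : v ≠ R.r) : ¬ R.desc v (R.p v) := by
  intro h
  have := R.desc_dep_le h
  have := R.dep_p_lt hv
  omega

lemma not_desc_child_self {u v : V} (hpu : R.p u = v) (hur : u ≠ R.r) : ¬ R.desc u v := by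
  intro h
  have := R.desc_dep_le h
  have := R.dep_p_lt hur
  rw [hpu] at this
  omega

lemma child_unique_aux {v u u' x : V} (hu : R.p u = v) (hur : u ≠ R.r)
    (hu' : R.p u' = v) (hur' : u' ≠ R.r) {m m' : ℕ} (hm : R.p^[m] x = u)
    (hm' : R.p^[m'] x = u') (hle : m ≤ m') : u = u' := by
  have h1 : R.p^[m' - m] u = u' := by
    rw [← hm, ← Function.iterate_add_apply]
    rw [Nat.sub_add_cancel hle]
    exact hm'
  rcases Nat.eq_zero_or_pos (m' - m) with h0 | hpos
  · rw [h0] at h1; exact h1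
  · exfalso
    obtain ⟨j, hj⟩ := Nat.exists_eq_succ_of_ne_zero (Nat.pos_iff_ne_zero.1 hpos)
    rw [hj, Function.iterate_succ_apply, hu] at h1
    have h2 : R.dep u' ≤ R.dep v := by rw [← h1]; exact R.dep_iter_le j v
    have h3 := R.dep_p_lt hur'
    rw [hu'] at h3
    omega

lemma child_unique {v u u' x : V} (hu : R.p u = v) (hur : u ≠ R.r)
    (hu' : R.p u' = v) (hur' : u' ≠ R.r) (hx : R.desc u x) (hx' : R.desc u' x) :
    u = u' := by
  obtain ⟨m, hm⟩ := hx
  obtain ⟨m', hm'⟩ := hx'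
  rcases le_total m m' with h | h
  · exact R.child_unique_aux hu hur hu' hur' hm hm' h
  · exact (R.child_unique_aux hu' hur' hu hur hm' hm h).symm

lemma edge_repr_unique {x y : V} (hx : x ≠ R.r) (hy : y ≠ R.r)
    (h : s(x, R.p x) = s(y, R.p y)) : x = y := by
  rw [Sym2.eq_iff] at h
  rcases h with ⟨h1, _⟩ | ⟨h1, h2⟩
  · exact h1
  · exfalso
    have d1 := R.dep_p_lt hx
    have d2 := R.dep_p_lt hy
    rw [h2] at d1
    rw [← h1] at d2
    omega

lemma adj_cases {x w : V} (h : G.Adj x w) :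
    (x ≠ R.r ∧ R.p x = w) ∨ (R.p w = x ∧ w ≠ R.r) := by
  rcases R.hedge h with h1 | h1
  · left
    refine ⟨?_, h1⟩
    rintro rfl
    rw [R.hpr] at h1
    exact h.ne h1
  · right
    refine ⟨h1, ?_⟩
    rintro rfl
    rw [R.hpr] at h1
    exact h.ne' h1

lemma reach_r (x : V) : ∃ n, R.p^[n] x = R.r := by
  have key : ∀ d, ∀ x : V, R.dep x ≤ d → ∃ n, R.p^[n] x = R.r := by
    intro d
    induction d using Nat.strong_induction_on with
    | _ d IH =>
      intro x hdx
      by_cases hx : x = R.r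
      · exact ⟨0, hx⟩
      · have hlt := R.dep_p_lt hx
        obtain ⟨m, hm⟩ := IH (R.dep (R.p x)) (by omega) (R.p x) le_rfl
        refine ⟨m + 1, ?_⟩
        rw [Function.iterate_add_apply, Function.iterate_one]
        exact hm
  exact key (R.dep x) x le_rfl

lemma exists_child_desc {v x : V} (hdesc : R.desc v x) (hx : x ≠ v) (hvr : v ≠ R.r) :
    ∃ c, R.p c = v ∧ c ≠ R.r ∧ R.desc c x := by
  obtain ⟨n, hn⟩ := hdesc
  match n, hn with
  | 0, hn => exact absurd hn hx
  | (m+1), hn =>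
    have hn' : R.p (R.p^[m] x) = v := by
      rw [← Function.iterate_succ_apply' R.p m x]; exact hn
    refine ⟨R.p^[m] x, hn', ?_, ⟨m, rfl⟩⟩
    intro hc
    apply hvr
    rw [← hn', hc, R.hpr]

lemma exists_child_desc_root {x : V} (hx : x ≠ R.r) :
    ∃ c, R.p c = R.r ∧ c ≠ R.r ∧ R.desc c x := by
  have key : ∀ d, ∀ x : V, R.dep x ≤ d → x ≠ R.r → ∃ c, R.p c = R.r ∧ c ≠ R.r ∧ R.desc c x := by
    intro d
    induction d using Nat.strong_induction_on with
    | _ d IH =>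
      intro x hdx hx
      by_cases hp : R.p x = R.r
      · exact ⟨x, hp, hx, R.desc_refl x⟩
      · have hlt := R.dep_p_lt hx
        obtain ⟨c, h1, h2, h3⟩ := IH (R.dep (R.p x)) (by omega) (R.p x) le_rfl hp
        exact ⟨c, h1, h2, R.desc_of_p_desc h3⟩
  exact key (R.dep x) x le_rfl hx

lemma neighborFinset_eq {x : V} (hx : x ≠ R.r) :
    G.neighborFinset x = insert (R.p x) (R.children x) := by
  ext w
  rw [SimpleGraph.mem_neighborFinset, Finset.mem_insert, R.mem_children]
  constructor
  · intro h
    rcases R.adj_cases h with ⟨_, h1⟩ | ⟨h1, h2⟩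
    · exact Or.inl h1.symm
    · exact Or.inr ⟨h1, h2⟩
  · rintro (rfl | ⟨h1, h2⟩)
    · exact R.hadj x hx
    · exact h1 ▸ (R.hadj w h2).symm

lemma p_not_mem_children (x : V) : R.p x ∉ R.children x := by
  rw [R.mem_children]
  rintro ⟨h1, h2⟩
  have := R.dep_p_lt h2
  rw [h1] at this
  have := R.dep_p_le x
  omega

lemma neighborFinset_root : G.neighborFinset R.r = R.children R.r := by
  ext w
  rw [SimpleGraph.mem_neighborFinset, R.mem_children]
  constructor
  · intro h
    rcases R.adj_cases h with ⟨hx, _⟩ | ⟨h1, h2⟩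
    · exact absurd rfl hx
    · exact ⟨h1, h2⟩
  · rintro ⟨h1, h2⟩
    exact h1 ▸ (R.hadj w h2).symm

lemma colorDeg_decomp (f : Sym2 V → Fin 2) (c : Fin 2) {x : V} (hx : x ≠ R.r) :
    colorDeg G f c x = ((R.children x).filter (fun u => f s(u, R.p u) = c)).card
      + (if f s(x, R.p x) = c then 1 else 0) := by
  rw [colorDeg_eq_card, R.neighborFinset_eq hx]
  have hcongr : ∀ u ∈ R.children x, (f s(x, u) = c) = (f s(u, R.p u) = c) := by
    intro u hu
    rw [R.mem_children] at hu
    rw [hu.1, Sym2.eq_swap]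
  by_cases hc : f s(x, R.p x) = c
  · rw [Finset.filter_insert, if_pos hc, if_pos hc]
    rw [Finset.card_insert_of_notMem (fun h => R.p_not_mem_children x (Finset.mem_of_mem_filter _ h))]
    rw [Finset.filter_congr (fun u hu => by rw [hcongr u hu])]
  · rw [Finset.filter_insert, if_neg hc, if_neg hc]
    rw [Finset.filter_congr (fun u hu => by rw [hcongr u hu])]
    omega

lemma colorDeg_root (f : Sym2 V → Fin 2) (c : Fin 2) :
    colorDeg G f c R.r = ((R.children R.r).filter (fun u => f s(u, R.p u) = c)).card := by
  rw [colorDeg_eq_card, R.neighborFinset_root]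
  apply congrArg Finset.card
  apply Finset.filter_congr
  intro u hu
  rw [R.mem_children] at hu
  rw [hu.1, Sym2.eq_swap]

end RootedStr
------------------------------ PART 3 ------------------------------
namespace RootedStr
variable {V : Type*} [Fintype V] [DecidableEq V] {G : SimpleGraph V} [DecidableRel G.Adj]
variable (R : RootedStr G)

def internalOK (f : Sym2 V → Fin 2) (v : V) : Prop :=
  ∀ ⦃x y⦄, G.Adj x y → R.desc v x → R.desc v y →
    colorDeg G f (f s(x, y)) x ≠ colorDeg G f (f s(x, y)) y

def Ach (v : V) (a : Fin 2) (d : ℕ) : Prop :=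
  ∃ f : Sym2 V → Fin 2, f s(v, R.p v) = a ∧ colorDeg G f a v = d ∧ R.internalOK f v

lemma ach_swap {v : V} {a : Fin 2} {d : ℕ} (h : R.Ach v a d) : R.Ach v (a + 1) d := by
  obtain ⟨f, h1, h2, h3⟩ := h
  refine ⟨fun e => f e + 1, by show f s(v, R.p v) + 1 = a + 1; rw [h1], ?_, ?_⟩
  · rw [colorDeg_comp_swap]; exact h2
  · intro x y hxy hdx hdy
    have := h3 hxy hdx hdy
    show colorDeg G (fun e => f e + 1) (f s(x,y) + 1) x ≠ colorDeg G (fun e => f e + 1) (f s(x,y) + 1) y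
    rw [colorDeg_comp_swap, colorDeg_comp_swap]
    exact this

lemma ach_all_colors {v : V} {a : Fin 2} {d : ℕ} (h : R.Ach v a d) :
    ∀ b, R.Ach v b d := by
  intro b
  have hb : ∀ a b : Fin 2, b = a ∨ b = a + 1 := by decide
  rcases hb a b with rfl | rfl
  · exact h
  · exact R.ach_swap h

noncomputable def meas (v : V) : ℕ := Set.ncard {x | R.desc v x}

lemma meas_child_lt {u v : V} (hpu : R.p u = v) (hur : u ≠ R.r) :
    R.meas u < R.meas v := by
  apply Set.ncard_lt_ncard
  · constructor
    · intro x hx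
      exact R.desc_trans hx (R.desc_of_p hpu)
    · intro hsub
      exact R.not_desc_child_self hpu hur (hsub (R.desc_refl v))
  · exact Set.toFinite _

lemma fin2_add_one_ne (a : Fin 2) : a + 1 ≠ a := by revert a; decide

/-- The shrub lemma. -/
lemma shrub : ∀ v, v ≠ R.r → ∀ a : Fin 2, ∃ d, 1 ≤ d ∧ d ≤ 4 ∧ R.Ach v a d := by
  have key : ∀ N, ∀ v, R.meas v = N → v ≠ R.r → ∀ a : Fin 2,
      ∃ d, 1 ≤ d ∧ d ≤ 4 ∧ R.Ach v a d := by
    intro N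
    induction N using Nat.strong_induction_on with
    | _ N IH =>
    intro v hN hv a
    classical
    set s := R.children v with hs
    have hchild : ∀ u ∈ s, R.p u = v ∧ u ≠ R.r := fun u hu => R.mem_children.1 hu
    have hIH : ∀ u ∈ s, ∀ b : Fin 2, ∃ d, 1 ≤ d ∧ d ≤ 4 ∧ R.Ach u b d := by
      intro u hu b
      obtain ⟨h1, h2⟩ := hchild u hu
      exact IH (R.meas u) (hN ▸ R.meas_child_lt h1 h2) u rfl h2 b
    set A : V → Set ℕ := fun u => {d | ∀ b, R.Ach u b d} with hA
    have hAne : ∀ u ∈ s, ∃ d, 1 ≤ d ∧ d ≤ 4 ∧ d ∈ A u := by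
      intro u hu
      obtain ⟨d, h1, h4, hach⟩ := hIH u hu 0
      exact ⟨d, h1, h4, fun b => R.ach_all_colors hach b⟩
    obtain ⟨T, hTs, hT3, hTmem, hTrest⟩ := core_lemma A s hAne
    have H : ∀ u : V, ∃ (g : Sym2 V → Fin 2) (du : ℕ), u ∈ s →
        (g s(u, R.p u) = (if u ∈ T then a else a + 1) ∧
         colorDeg G g (if u ∈ T then a else a + 1) u = du ∧
         du ≠ (if u ∈ T then T.card + 1 else s.card - T.card) ∧
         R.internalOK g u) := by
      intro u
      by_cases hu : u ∈ s
      · by_cases hT : u ∈ T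
        · obtain ⟨d, hd, hdne⟩ := hTmem u hT
          obtain ⟨g, h1, h2, h3⟩ := hd a
          exact ⟨g, d, fun _ => ⟨by simp only [if_pos hT]; exact h1,
            by simp only [if_pos hT]; exact h2, by simp only [if_pos hT]; exact hdne, h3⟩⟩
        · obtain ⟨d, hd, hdne⟩ := hTrest u (Finset.mem_sdiff.2 ⟨hu, hT⟩)
          obtain ⟨g, h1, h2, h3⟩ := hd (a + 1)
          exact ⟨g, d, fun _ => ⟨by simp only [if_neg hT]; exact h1,
            by simp only [if_neg hT]; exact h2, by simp only [if_neg hT]; exact hdne, h3⟩⟩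
      · exact ⟨fun _ => 0, 0, fun h => absurd h hu⟩
    choose gg du hgg using H
    -- the child containing a given vertex
    have hchoice : ∀ x : V, ∃ c : V, (R.desc v x ∧ x ≠ v) →
        (R.p c = v ∧ c ≠ R.r ∧ R.desc c x) := by
      intro x
      by_cases h : R.desc v x ∧ x ≠ v
      · obtain ⟨c, h1, h2, h3⟩ := R.exists_child_desc h.1 h.2 hv
        exact ⟨c, fun _ => ⟨h1, h2, h3⟩⟩
      · exact ⟨v, fun hc => absurd hc h⟩
    choose ch hch using hchoice
    have huniq : ∀ x c, R.p c = v → c ≠ R.r → R.desc c x → ch x = c := by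
      intro x c h1 h2 h3
      have hdx : R.desc v x := R.desc_trans h3 (R.desc_of_p h1)
      have hxv : x ≠ v := by
        rintro rfl
        exact R.not_desc_child_self h1 h2 h3
      obtain ⟨e1, e2, e3⟩ := hch x ⟨hdx, hxv⟩
      exact R.child_unique e1 e2 h1 h2 e3 h3
    set F : Sym2 V → Fin 2 := fun e =>
      if h : ∃ x, (R.desc v x ∧ x ≠ v) ∧ e = s(x, R.p x) then gg (ch h.choose) e else a
      with hF
    have F_spec2 : ∀ x, R.desc v x → x ≠ v → F s(x, R.p x) = gg (ch x) s(x, R.p x) := by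
      intro x hdx hxv
      have hex : ∃ x', (R.desc v x' ∧ x' ≠ v) ∧ s(x, R.p x) = s(x', R.p x') :=
        ⟨x, ⟨hdx, hxv⟩, rfl⟩
      rw [hF]
      simp only [dif_pos hex]
      obtain ⟨⟨hd', hx'⟩, he⟩ := hex.choose_spec
      have : hex.choose = x :=
        R.edge_repr_unique (R.desc_ne_r hv hd') (R.desc_ne_r hv hdx) he.symm
      rw [this]
    have F_spec1 : F s(v, R.p v) = a := by
      rw [hF]
      have hnex : ¬ ∃ x', (R.desc v x' ∧ x' ≠ v) ∧ s(v, R.p v) = s(x', R.p x') := by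
        rintro ⟨x', ⟨hd, hxv⟩, he⟩
        exact hxv (R.edge_repr_unique (R.desc_ne_r hv hd) hv he.symm)
      simp only [dif_neg hnex]
    have F_incident : ∀ x w, R.desc v x → x ≠ v → G.Adj x w →
        F s(x, w) = gg (ch x) s(x, w) := by
      intro x w hdx hxv hxw
      rcases R.hedge hxw with h1 | h1
      · rw [← h1]
        exact F_spec2 x hdx hxv
      · have hwr : w ≠ R.r := by
          rintro rfl
          rw [R.hpr] at h1
          exact (R.desc_ne_r hv hdx) h1.symm
        have hdw : R.desc v w := R.desc_trans (R.desc_of_p h1) hdx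
        have hwv : w ≠ v := by
          intro hwveq
          have hd1 := R.desc_dep_lt hdx hxv (R.desc_ne_r hv hdx)
          have hd2 := R.dep_p_le v
          rw [hwveq] at h1
          rw [h1] at hd2
          omega
        have hchw : ch w = ch x := by
          obtain ⟨e1, e2, e3⟩ := hch x ⟨hdx, hxv⟩
          exact huniq w (ch x) e1 e2 (R.desc_trans (R.desc_of_p h1) e3)
        have hsym : s(x, w) = s(w, R.p w) := by rw [h1, Sym2.eq_swap]
        rw [hsym, F_spec2 w hdw hwv, hchw]
    have htrans : ∀ x, R.desc v x → x ≠ v → ∀ c, colorDeg G F c x = colorDeg G (gg (ch x)) c x := by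
      intro x hdx hxv c
      exact colorDeg_congr G _ _ c x (fun w hw => F_incident x w hdx hxv hw)
    have hsu : ∀ u ∈ s, R.desc v u ∧ u ≠ v ∧ ch u = u := by
      intro u hu
      obtain ⟨h1, h2⟩ := hchild u hu
      have huv : u ≠ v := by
        rintro rfl
        exact R.p_ne_self hv h1
      exact ⟨R.desc_of_p h1, huv, huniq u u h1 h2 (R.desc_refl u)⟩
    have hFchild : ∀ u ∈ s, F s(u, R.p u) = (if u ∈ T then a else a + 1) := by
      intro u hu
      obtain ⟨hd, huv, hc⟩ := hsu u hu
      rw [F_spec2 u hd huv, hc]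
      exact (hgg u hu).1
    have hv1 : colorDeg G F a v = T.card + 1 := by
      rw [R.colorDeg_decomp F a hv]
      have e1 : s.filter (fun u => F s(u, R.p u) = a) = T := by
        rw [Finset.filter_congr (q := fun u => u ∈ T) ?_]
        · rw [Finset.filter_mem_eq_inter, Finset.inter_eq_right.2 hTs]
        · intro u hu
          rw [hFchild u hu]
          by_cases hT : u ∈ T
          · simp [hT]
          · simp only [if_neg hT, hT, iff_false]
            exact fin2_add_one_ne a
      rw [e1, if_pos F_spec1]
    have hv2 : colorDeg G F (a + 1) v = s.card - T.card := by
      rw [R.colorDeg_decomp F (a + 1) hv]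
      have e1 : s.filter (fun u => F s(u, R.p u) = a + 1) = s \ T := by
        apply Finset.ext
        intro u
        rw [Finset.mem_filter, Finset.mem_sdiff]
        constructor
        · rintro ⟨hu, hc⟩
          refine ⟨hu, fun hT => ?_⟩
          rw [hFchild u hu, if_pos hT] at hc
          exact fin2_add_one_ne a hc.symm
        · rintro ⟨hu, hT⟩
          refine ⟨hu, ?_⟩
          rw [hFchild u hu, if_neg hT]
      have e2 : F s(v, R.p v) ≠ a + 1 := by
        rw [F_spec1]
        exact fun h => fin2_add_one_ne a h.symm
      rw [e1, if_neg e2, Finset.card_sdiff_of_subset hTs]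
      omega
    have hinternal : R.internalOK F v := by
      have hkey : ∀ x y, G.Adj x y → R.desc v x → R.desc v y → R.p x = y →
          colorDeg G F (F s(x, y)) x ≠ colorDeg G F (F s(x, y)) y := by
        intro x y hxy hdx hdy hpx
        have hxv : x ≠ v := by
          rintro rfl
          rw [← hpx] at hdy
          exact R.parent_not_desc hv hdy
        by_cases hyv : y = v
        · have hxs : x ∈ s := R.mem_children.2 ⟨hpx.trans hyv, R.desc_ne_r hv hdx⟩
          obtain ⟨hd, hxv', hc⟩ := hsu x hxs
          have hFe : F s(x, y) = (if x ∈ T then a else a + 1) := by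
            have he : s(x, y) = s(x, R.p x) := by rw [hpx]
            rw [he, F_spec2 x hd hxv', hc]
            exact (hgg x hxs).1
          rw [hFe, hyv]
          by_cases hT : x ∈ T
          · rw [if_pos hT]
            have h2 := (hgg x hxs).2.1
            rw [if_pos hT] at h2
            have h3 := (hgg x hxs).2.2.1
            rw [if_pos hT] at h3
            rw [htrans x hd hxv' a, hc, h2, hv1]
            exact h3
          · rw [if_neg hT]
            have h2 := (hgg x hxs).2.1
            rw [if_neg hT] at h2
            have h3 := (hgg x hxs).2.2.1
            rw [if_neg hT] at h3
            rw [htrans x hd hxv' (a + 1), hc, h2, hv2]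
            exact h3
        · obtain ⟨e1, e2, e3⟩ := hch x ⟨hdx, hxv⟩
          have hxch : x ≠ ch x := by
            intro hx
            rw [← hx, hpx] at e1
            exact hyv e1
          have hdyu : R.desc (ch x) y := by
            rw [← hpx]
            exact R.desc_p e3 hxch
          have hchy : ch y = ch x := huniq y (ch x) e1 e2 hdyu
          have hxchs : ch x ∈ s := R.mem_children.2 ⟨e1, e2⟩
          have hFe : F s(x, y) = gg (ch x) s(x, y) := F_incident x y hdx hxv hxy
          rw [hFe, htrans x hdx hxv _, htrans y hdy hyv _, hchy]
          exact (hgg (ch x) hxchs).2.2.2 hxy e3 hdyu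
      intro x y hxy hdx hdy
      rcases R.hedge hxy with h | h
      · exact hkey x y hxy hdx hdy h
      · have hres := hkey y x hxy.symm hdy hdx h
        rw [show s(x, y) = s(y, x) from Sym2.eq_swap]
        exact hres.symm
    exact ⟨T.card + 1, by omega, by omega, F, F_spec1, hv1, hinternal⟩
  intro v hv a
  exact key (R.meas v) v rfl hv a

end RootedStr
namespace RootedStr
variable {V : Type*} [Fintype V] [DecidableEq V] {G : SimpleGraph V} [DecidableRel G.Adj]
variable (R : RootedStr G)

theorem exists_locIrr (hr : 5 ≤ G.degree R.r) :
    ∃ φ : Sym2 V → Fin 2, IsLocIrrColoring G φ := by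
  classical
  set s := R.children R.r with hs
  have hdeg : G.degree R.r = s.card := by
    show (G.neighborFinset R.r).card = s.card
    rw [R.neighborFinset_root]
  have hr5 : 5 ≤ s.card := hdeg ▸ hr
  have H : ∀ u : V, ∃ (g : Sym2 V → Fin 2) (du : ℕ), u ∈ s →
      (g s(u, R.p u) = 0 ∧ colorDeg G g 0 u = du ∧ du ≠ s.card ∧ R.internalOK g u) := by
    intro u
    by_cases hu : u ∈ s
    · obtain ⟨h1, h2⟩ := R.mem_children.1 hu
      obtain ⟨d, hd1, hd4, g, hg1, hg2, hg3⟩ := R.shrub u h2 0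
      exact ⟨g, d, fun _ => ⟨hg1, hg2, by omega, hg3⟩⟩
    · exact ⟨fun _ => 0, 0, fun h => absurd h hu⟩
  choose gg du hgg using H
  have hchoice : ∀ x : V, ∃ c : V, x ≠ R.r → (R.p c = R.r ∧ c ≠ R.r ∧ R.desc c x) := by
    intro x
    by_cases h : x = R.r
    · exact ⟨R.r, fun hc => absurd h hc⟩
    · obtain ⟨c, h1, h2, h3⟩ := R.exists_child_desc_root h
      exact ⟨c, fun _ => ⟨h1, h2, h3⟩⟩
  choose ch hch using hchoice
  have huniq : ∀ x c, R.p c = R.r → c ≠ R.r → R.desc c x → ch x = c := by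
    intro x c h1 h2 h3
    have hxr : x ≠ R.r := by
      rintro rfl
      exact R.r_not_desc h2 h3
    obtain ⟨e1, e2, e3⟩ := hch x hxr
    exact R.child_unique e1 e2 h1 h2 e3 h3
  set F : Sym2 V → Fin 2 := fun e =>
    if h : ∃ x, x ≠ R.r ∧ e = s(x, R.p x) then gg (ch h.choose) e else 0 with hF
  have F_spec2 : ∀ x, x ≠ R.r → F s(x, R.p x) = gg (ch x) s(x, R.p x) := by
    intro x hx
    have hex : ∃ x', x' ≠ R.r ∧ s(x, R.p x) = s(x', R.p x') := ⟨x, hx, rfl⟩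
    rw [hF]
    simp only [dif_pos hex]
    obtain ⟨hx', he⟩ := hex.choose_spec
    rw [R.edge_repr_unique hx' hx he.symm]
  have F_incident : ∀ x w, x ≠ R.r → G.Adj x w → F s(x, w) = gg (ch x) s(x, w) := by
    intro x w hx hxw
    rcases R.hedge hxw with h1 | h1
    · rw [← h1]
      exact F_spec2 x hx
    · have hwr : w ≠ R.r := by
        rintro rfl
        rw [R.hpr] at h1
        exact hx h1.symm
      have hchw : ch w = ch x := by
        obtain ⟨e1, e2, e3⟩ := hch x hx
        exact huniq w (ch x) e1 e2 (R.desc_trans (R.desc_of_p h1) e3)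
      have hsym : s(x, w) = s(w, R.p w) := by rw [h1, Sym2.eq_swap]
      rw [hsym, F_spec2 w hwr, hchw]
  have htrans : ∀ x, x ≠ R.r → ∀ c, colorDeg G F c x = colorDeg G (gg (ch x)) c x :=
    fun x hx c => colorDeg_congr G _ _ c x (fun w hw => F_incident x w hx hw)
  have hchu : ∀ u ∈ s, ch u = u := by
    intro u hu
    obtain ⟨h1, h2⟩ := R.mem_children.1 hu
    exact huniq u u h1 h2 (R.desc_refl u)
  have hFchild : ∀ u ∈ s, F s(u, R.p u) = 0 := by
    intro u hu
    obtain ⟨h1, h2⟩ := R.mem_children.1 hu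
    rw [F_spec2 u h2, hchu u hu]
    exact (hgg u hu).1
  have hroot : colorDeg G F 0 R.r = s.card := by
    rw [R.colorDeg_root, Finset.filter_true_of_mem hFchild]
  refine ⟨F, ?_⟩
  have hkey : ∀ x y, G.Adj x y → R.p x = y →
      colorDeg G F (F s(x, y)) x ≠ colorDeg G F (F s(x, y)) y := by
    intro x y hxy hpx
    have hxr : x ≠ R.r := by
      rintro rfl
      rw [R.hpr] at hpx
      exact hxy.ne hpx
    by_cases hyr : y = R.r
    · have hxs : x ∈ s := R.mem_children.2 ⟨hpx.trans hyr, hxr⟩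
      have hFe : F s(x, y) = 0 := by
        have he : s(x, y) = s(x, R.p x) := by rw [hpx]
        rw [he]
        exact hFchild x hxs
      rw [hFe, hyr, hroot, htrans x hxr 0, hchu x hxs, (hgg x hxs).2.1]
      exact (hgg x hxs).2.2.1
    · obtain ⟨e1, e2, e3⟩ := hch x hxr
      have hxch : x ≠ ch x := by
        intro hx
        rw [← hx, hpx] at e1
        exact hyr e1
      have hdyu : R.desc (ch x) y := by
        rw [← hpx]
        exact R.desc_p e3 hxch
      have hchy : ch y = ch x := huniq y (ch x) e1 e2 hdyu
      have hxchs : ch x ∈ s := R.mem_children.2 ⟨e1, e2⟩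
      have hFe : F s(x, y) = gg (ch x) s(x, y) := F_incident x y hxr hxy
      rw [hFe, htrans x hxr _, htrans y hyr _, hchy]
      exact (hgg (ch x) hxchs).2.2.2 hxy e3 hdyu
  intro x y hxy
  rcases R.hedge hxy with h | h
  · exact hkey x y hxy h
  · have hres := hkey y x hxy.symm h
    rw [show s(x, y) = s(y, x) from Sym2.eq_swap]
    exact hres.symm

end RootedStr


/-- Every tree with maximum degree at least 5 admits a locally irregular edge
coloring with 2 colors. -/

theorem tree_maxDegree_ge_five_two_colorable {V : Type*} [Fintype V] [DecidableEq V]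
    (G : SimpleGraph V) [DecidableRel G.Adj] (hT : G.IsTree)
    (hΔ : 5 ≤ G.maxDegree) :
    ∃ φ : Sym2 V → Fin 2, IsLocIrrColoring G φ := by
  classical
  haveI : Nonempty V := hT.isConnected.nonempty
  obtain ⟨r, hr⟩ := G.exists_maximal_degree_vertex
  have hpaths := fun v => hT.existsUnique_path v r
  choose W hW using hpaths
  have hWuniq : ∀ v (q : G.Walk v r), q.IsPath → q = W v := fun v q hq => (hW v).2 q hq
  have hWnil : W r = SimpleGraph.Walk.nil := (hWuniq r _ SimpleGraph.Walk.IsPath.nil).symm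
  have hdecomp : ∀ v, v ≠ r → ∃ (w : V) (h : G.Adj v w) (q : G.Walk w r),
      W v = SimpleGraph.Walk.cons h q ∧ W w = q := by
    intro v hv
    obtain ⟨w, h, q, hq⟩ := SimpleGraph.Walk.exists_eq_cons_of_ne hv (W v)
    have hqpath : q.IsPath := by
      have := (hW v).1
      rw [hq, SimpleGraph.Walk.cons_isPath_iff] at this
      exact this.1
    exact ⟨w, h, q, hq, (hWuniq w q hqpath).symm⟩
  have hgetvert : ∀ {v w : V} (h : G.Adj v w) (q : G.Walk w r),
      (SimpleGraph.Walk.cons h q).getVert 1 = w := by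
    intro v w h q
    rw [SimpleGraph.Walk.getVert_cons_succ, SimpleGraph.Walk.getVert_zero]
  set R : RootedStr G := {
    r := r
    p := fun v => (W v).getVert 1
    dep := fun v => (W v).length
    hpr := by show (W r).getVert 1 = r; rw [hWnil]; rfl
    hadj := by
      intro v hv
      obtain ⟨w, h, q, hq, _⟩ := hdecomp v hv
      show G.Adj v ((W v).getVert 1)
      rw [hq, hgetvert h q]
      exact h
    hdep := by
      intro v hv
      obtain ⟨w, h, q, hq, hWw⟩ := hdecomp v hv
      show (W ((W v).getVert 1)).length + 1 = (W v).length
      rw [hq, hgetvert h q, hWw, SimpleGraph.Walk.length_cons]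
    hedge := by
      intro u w h
      by_cases hq : (SimpleGraph.Walk.cons h (W w)).IsPath
      · left
        show (W u).getVert 1 = w
        rw [← hWuniq u _ hq, hgetvert h (W w)]
      · right
        rw [SimpleGraph.Walk.cons_isPath_iff] at hq
        push_neg at hq
        have hu : u ∈ (W w).support := hq (hW w).1
        have hq1 : ((W w).takeUntil u hu).IsPath := (hW w).1.takeUntil hu
        have hes : (SimpleGraph.Walk.cons h.symm (SimpleGraph.Walk.nil : G.Walk u u)).IsPath := by
          rw [SimpleGraph.Walk.cons_isPath_iff]
          refine ⟨SimpleGraph.Walk.IsPath.nil, ?_⟩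
          simp [h.ne']
        have hq1es : (W w).takeUntil u hu = SimpleGraph.Walk.cons h.symm SimpleGraph.Walk.nil := by
          have := hT.IsAcyclic.path_unique ⟨(W w).takeUntil u hu, hq1⟩ ⟨_, hes⟩
          exact congrArg Subtype.val this
        have hWw : W w = SimpleGraph.Walk.cons h.symm ((W w).dropUntil u hu) := by
          conv_lhs => rw [← SimpleGraph.Walk.take_spec (W w) hu]
          rw [hq1es]
          rfl
        show (W w).getVert 1 = u
        rw [hWw, hgetvert h.symm _]
  } with hR
  have hrR : R.r = r := rfl
  apply R.exists_locIrr
  rw [hrR, ← hr]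
  exact hΔ
end
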